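/- arXiv:1911.04892 — 7 statements merged into one kernel-verified Lean document; each statement's English description precedes it below -/
import Mathlib

section
/- Let X be a reflexive real Banach space and A : X ⇒ X* a maximal monotone operator. Then for every x ∈ D(A) and every v ∈ X \ {0}, one has the inclusions Limsup_{w→v, t↓0} A(x+tw) ⊆ w-Limsup_{w→v, t↓0} A(x+tw) ⊆ A(x;v). -/
open Filter Topology Pointwise

variable {X : Type*} [NormedAddCommGroup X] [NormedSpace ℝ X]

/-- A set-valued operator `A : X ⇒ X*` is monotone if
`⟨x* − y*, x − y⟩ ≥ 0` for all pairs in its graph. -/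
def IsMonotoneOp (A : X → Set (StrongDual ℝ X)) : Prop :=
  ∀ ⦃x y : X⦄ ⦃x' y' : StrongDual ℝ X⦄, x' ∈ A x → y' ∈ A y → 0 ≤ (x' - y') (x - y)

/-- A monotone operator is maximal monotone if its graph has no proper monotone extension. -/
def IsMaxMonotoneOp (A : X → Set (StrongDual ℝ X)) : Prop :=
  IsMonotoneOp A ∧ ∀ B : X → Set (StrongDual ℝ X), IsMonotoneOp B → (∀ x, A x ⊆ B x) → B = A

/-- The domain `D(A)` of a set-valued operator. -/
def opDom (A : X → Set (StrongDual ℝ X)) : Set X := {x | (A x).Nonempty}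

/-- `X` is reflexive: the canonical embedding into the double dual is surjective. -/
def IsReflexiveSp (X : Type*) [NormedAddCommGroup X] [NormedSpace ℝ X] : Prop :=
  Function.Surjective (NormedSpace.inclusionInDoubleDual ℝ X)

/-- Support function `σ_S(v) = sup {⟨s,v⟩ : s ∈ S}`, with values in `EReal`. -/
noncomputable def suppFn (S : Set (StrongDual ℝ X)) (v : X) : EReal :=
  ⨆ s ∈ S, ((s v : ℝ) : EReal)

/-- The face `A(x;v) = {x* ∈ Ax : ⟨x*,v⟩ = σ_{Ax}(v)}`. -/
def face (A : X → Set (StrongDual ℝ X)) (x v : X) : Set (StrongDual ℝ X) :=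
  {p | p ∈ A x ∧ ((p v : ℝ) : EReal) = suppFn (A x) v}

/-- Weak convergence of a sequence of functionals (in a reflexive space this coincides with
pointwise convergence on `X`). -/
def WeakLim (u : ℕ → StrongDual ℝ X) (p : StrongDual ℝ X) : Prop :=
  ∀ z : X, Tendsto (fun n => u n z) atTop (𝓝 (p z))

/-- Strong outer limit `Limsup_{w→v, t↓0} A(x+tw)`. -/
def strongLimsup (A : X → Set (StrongDual ℝ X)) (x v : X) :
    Set (StrongDual ℝ X) :=
  {p | ∃ (w : ℕ → X) (t : ℕ → ℝ) (q : ℕ → StrongDual ℝ X),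
    Tendsto w atTop (𝓝 v) ∧ (∀ n, 0 < t n) ∧ Tendsto t atTop (𝓝 0) ∧
    (∀ n, q n ∈ A (x + t n • w n)) ∧ Tendsto q atTop (𝓝 p)}

/-- Weak outer limit `w-Limsup_{w→v, t↓0} A(x+tw)`. -/
def weakLimsup (A : X → Set (StrongDual ℝ X)) (x v : X) :
    Set (StrongDual ℝ X) :=
  {p | ∃ (w : ℕ → X) (t : ℕ → ℝ) (q : ℕ → StrongDual ℝ X),
    Tendsto w atTop (𝓝 v) ∧ (∀ n, 0 < t n) ∧ Tendsto t atTop (𝓝 0) ∧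
    (∀ n, q n ∈ A (x + t n • w n)) ∧ WeakLim q p}

/-- `A0` is the minimal-norm selection of `A`. -/
def IsMinNormSelection (A : X → Set (StrongDual ℝ X)) (A0 : X → StrongDual ℝ X) :
    Prop :=
  ∀ x ∈ opDom A, A0 x ∈ A x ∧ ∀ q ∈ A x, ‖A0 x‖ ≤ ‖q‖

/-- Weak outer limit of a (single-valued) selection along points of `D`:
`w-Limsup_{w→v, t↓0, x+tw∈D} Ã(x+tw)`. -/
def weakLimsupSel (A0 : X → StrongDual ℝ X) (D : Set X) (x v : X) :
    Set (StrongDual ℝ X) :=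
  {p | ∃ (w : ℕ → X) (t : ℕ → ℝ),
    Tendsto w atTop (𝓝 v) ∧ (∀ n, 0 < t n) ∧ Tendsto t atTop (𝓝 0) ∧
    (∀ n, x + t n • w n ∈ D) ∧ WeakLim (fun n => A0 (x + t n • w n)) p}

/-- Tangent cone `T(x;S) = closure (⋃_{t>0} t⁻¹ (S − x))`. -/
def tanCone (S : Set X) (x : X) : Set X :=
  closure {v : X | ∃ t : ℝ, 0 < t ∧ x + t • v ∈ S}

/-- Normal cone `N(x;S)` (empty when `x ∉ S`). -/
def normalCone (S : Set X) (x : X) : Set (StrongDual ℝ X) :=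
  {p | x ∈ S ∧ ∀ y ∈ S, p (y - x) ≤ 0}

/-- The set of sequential lower limits `liminf_n ⟨A0(x+t_n w_n), w_n⟩` over all sequences
`w_n → v`, `t_n ↓ 0` with `x + t_n w_n ∈ D`. -/
noncomputable def seqLiminfSet (A0 : X → StrongDual ℝ X) (D : Set X) (x v : X) :
    Set EReal :=
  {l | ∃ (w : ℕ → X) (t : ℕ → ℝ),
    Tendsto w atTop (𝓝 v) ∧ (∀ n, 0 < t n) ∧ Tendsto t atTop (𝓝 0) ∧
    (∀ n, x + t n • w n ∈ D) ∧
    l = liminf (fun n => (((A0 (x + t n • w n)) (w n) : ℝ) : EReal)) atTop}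

/-!
A weak cluster point `p` of `A` along `x + tₙwₙ` is monotonically related to the whole graph of
`A`: pass to the limit in `⟨qₙ - b, x + tₙwₙ - y⟩ ≥ 0`, which is legitimate because weakly
convergent sequences are bounded (uniform boundedness). Maximality then gives `p ∈ Ax`. Testing
monotonicity against `s ∈ Ax` instead and dividing by `tₙ > 0` gives `⟨qₙ - s, wₙ⟩ ≥ 0`, hence
`⟨p - s, v⟩ ≥ 0` in the limit, so `p` maximises `⟨·, v⟩` on `Ax`.
-/

namespace WeakLim

theorem of_tendsto {q : ℕ → StrongDual ℝ X} {p : StrongDual ℝ X}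
    (hq : Tendsto q atTop (𝓝 p)) : WeakLim q p := fun z =>
  ((ContinuousLinearMap.apply ℝ ℝ z).continuous.tendsto p).comp hq

theorem sub_const {q : ℕ → StrongDual ℝ X} {p : StrongDual ℝ X} (hq : WeakLim q p)
    (b : StrongDual ℝ X) : WeakLim (fun n => q n - b) (p - b) := fun z =>
  (hq z).sub_const (b z)

theorem exists_norm_le [CompleteSpace X] {q : ℕ → StrongDual ℝ X} {p : StrongDual ℝ X}
    (hq : WeakLim q p) : ∃ C, ∀ n, ‖q n‖ ≤ C :=
  banach_steinhaus fun z => by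
    obtain ⟨C, hC⟩ := (hq z).norm.bddAbove_range
    exact ⟨C, fun n => hC ⟨n, rfl⟩⟩

theorem tendsto_apply [CompleteSpace X] {q : ℕ → StrongDual ℝ X} {p : StrongDual ℝ X}
    (hq : WeakLim q p) {y : ℕ → X} {y₀ : X} (hy : Tendsto y atTop (𝓝 y₀)) :
    Tendsto (fun n => q n (y n)) atTop (𝓝 (p y₀)) := by
  obtain ⟨C, hC⟩ := hq.exists_norm_le
  have hgap : Tendsto (fun n => q n (y n - y₀)) atTop (𝓝 0) := by
    refine squeeze_zero_norm (fun n => ((q n).le_opNorm _).trans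
      (mul_le_mul_of_nonneg_right (hC n) (norm_nonneg _))) ?_
    simpa using (tendsto_sub_nhds_zero_iff.mpr hy).norm.const_mul C
  simpa using hgap.add (hq y₀)

theorem apply_nonneg [CompleteSpace X] {q : ℕ → StrongDual ℝ X} {p : StrongDual ℝ X}
    (hq : WeakLim q p) {y : ℕ → X} {y₀ : X} (hy : Tendsto y atTop (𝓝 y₀))
    (hnonneg : ∀ n, 0 ≤ q n (y n)) : 0 ≤ p y₀ :=
  ge_of_tendsto' (hq.tendsto_apply hy) hnonneg

end WeakLim

theorem IsMaxMonotoneOp.mem_of_forall_monotone_pair {A : X → Set (StrongDual ℝ X)}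
    (hA : IsMaxMonotoneOp A) {x : X} {p : StrongDual ℝ X}
    (hp : ∀ y, ∀ b ∈ A y, 0 ≤ (p - b) (x - y)) : p ∈ A x := by
  let B : X → Set (StrongDual ℝ X) := fun y => A y ∪ {p' | y = x ∧ p' = p}
  have hB : IsMonotoneOp B := by
    have swap : ∀ y, ∀ b ∈ A y, 0 ≤ (b - p) (y - x) := fun y b hb => by
      have h := hp y b hb
      simp only [map_sub, sub_apply] at h ⊢
      linarith
    rintro y₁ y₂ a b (ha | ⟨rfl, rfl⟩) (hb | ⟨rfl, rfl⟩)
    · exact hA.1 ha hb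
    · exact swap y₁ a ha
    · exact hp y₂ b hb
    · simp
  have hpB : p ∈ B x := Or.inr ⟨rfl, rfl⟩
  rwa [hA.2 B hB fun _ => Set.subset_union_left] at hpB

theorem mem_face_of_forall_apply_le {A : X → Set (StrongDual ℝ X)} {x v : X}
    {p : StrongDual ℝ X} (hp : p ∈ A x) (hmax : ∀ s ∈ A x, s v ≤ p v) : p ∈ face A x v :=
  ⟨hp, le_antisymm (le_iSup₂ (f := fun s (_ : s ∈ A x) => ((s v : ℝ) : EReal)) p hp)
    (iSup₂_le fun s hs => EReal.coe_le_coe_iff.mpr (hmax s hs))⟩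

theorem strongLimsup_subset_weakLimsup (A : X → Set (StrongDual ℝ X)) (x v : X) :
    strongLimsup A x v ⊆ weakLimsup A x v := by
  rintro p ⟨w, t, q, hw, htpos, ht0, hqA, hq⟩
  exact ⟨w, t, q, hw, htpos, ht0, hqA, WeakLim.of_tendsto hq⟩

theorem weakLimsup_subset_face [CompleteSpace X] {A : X → Set (StrongDual ℝ X)}
    (hA : IsMaxMonotoneOp A) (x v : X) : weakLimsup A x v ⊆ face A x v := by
  rintro p ⟨w, t, q, hw, htpos, ht0, hqA, hq⟩
  have hx : Tendsto (fun n => x + t n • w n) atTop (𝓝 x) := by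
    simpa using (ht0.smul hw).const_add x
  have hpA : p ∈ A x := hA.mem_of_forall_monotone_pair fun y b hb =>
    (hq.sub_const b).apply_nonneg (hx.sub_const y) fun n => hA.1 (hqA n) hb
  refine mem_face_of_forall_apply_le hpA fun s hs => ?_
  have hdir : ∀ n, 0 ≤ (q n - s) (w n) := fun n => by
    have h := hA.1 (hqA n) hs
    rw [add_sub_cancel_left, map_smul, smul_eq_mul] at h
    exact nonneg_of_mul_nonneg_right h (htpos n)
  have h := (hq.sub_const s).apply_nonneg hw hdir
  rwa [sub_apply, sub_nonneg] at h

theorem strongLimsup_subset_weakLimsup_subset_face_general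
    [CompleteSpace X]
    (A : X → Set (StrongDual ℝ X)) (hA : IsMaxMonotoneOp A) :
    ∀ x ∈ opDom A, ∀ v : X, v ≠ 0 →
      strongLimsup A x v ⊆ weakLimsup A x v ∧ weakLimsup A x v ⊆ face A x v :=
  fun x _ v _ => ⟨strongLimsup_subset_weakLimsup A x v, weakLimsup_subset_face hA x v⟩

/-- In a reflexive Banach space, for a maximal monotone operator `A` one has
`Limsup ⊆ w-Limsup ⊆ A(x;v)` for every `x ∈ D(A)` and `v ≠ 0`. -/
theorem strongLimsup_subset_weakLimsup_subset_face
    [CompleteSpace X] (hrefl : IsReflexiveSp X)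
    (A : X → Set (StrongDual ℝ X)) (hA : IsMaxMonotoneOp A) :
    ∀ x ∈ opDom A, ∀ v : X, v ≠ 0 →
      strongLimsup A x v ⊆ weakLimsup A x v ∧ weakLimsup A x v ⊆ face A x v :=
  strongLimsup_subset_weakLimsup_subset_face_general A hA
end

section
/- Let X be a reflexive real Banach space and A : X ⇒ X* a maximal monotone operator. Then for every x ∈ D(A), the norm-boundary of the set Ax in X* equals the norm-closure of the union ∪_{v ∈ X \ {0}} A(x;v) of all faces of Ax in nonzero directions. -/
open Filter Topology Pointwise

variable {X : Type*} [NormedAddCommGroup X] [NormedSpace ℝ X]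

/-! The values `A x` of a maximal monotone operator are closed and convex, being intersections of
the closed half-spaces `{p | ⟨q, x - y⟩ ≤ ⟨p, x - y⟩}` over `q ∈ A y`. A point of a face `A(x;v)`
with `v ≠ 0` maximises the nonzero functional `⟨·, v⟩` on `A x`, so it is not interior. Conversely,
by the Bishop–Phelps theorem the support points of a closed convex subset of a Banach space (here
`X*`) are dense in its boundary, and by reflexivity each supporting functional is evaluation at
some `v ≠ 0`, so each support point lies in a face. Bishop–Phelps follows from the
Brøndsted–Ekeland principle: for the cone order `‖y - c‖ ≤ f y - f c` with `‖f‖ > 1` there is a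
maximal point `c` of `A x` near any boundary point, and separating `A x` from the open cone at `c`
gives a functional supporting `A x` at `c`. -/

open Set

section Ekeland

theorem exists_mem_forall_le_add {β : Type*} {s : Set β} {φ : β → ℝ} (hs : s.Nonempty)
    (hbdd : BddAbove (φ '' s)) {ε : ℝ} (hε : 0 < ε) : ∃ b ∈ s, ∀ x ∈ s, φ x ≤ φ b + ε := by
  obtain ⟨_, ⟨b, hb, rfl⟩, hlt⟩ := exists_lt_of_lt_csSup (hs.image φ) (sub_lt_self _ hε)
  exact ⟨b, hb, fun x hx => by linarith [le_csSup hbdd ⟨x, hx, rfl⟩]⟩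

variable {α : Type*} [MetricSpace α] [CompleteSpace α]

/-- Brøndsted's form of Ekeland's variational principle. -/
theorem exists_maximal_dist_le_sub {C : Set α} (hC : IsClosed C) {φ : α → ℝ}
    (hφ : Continuous φ) (hbdd : BddAbove (φ '' C)) {p : α} (hp : p ∈ C) :
    ∃ c ∈ C, dist c p ≤ φ c - φ p ∧ ∀ x ∈ C, dist x c ≤ φ x - φ c → x = c := by
  set S : α → Set α := fun a => {x | x ∈ C ∧ dist x a ≤ φ x - φ a}
  have self_mem : ∀ a ∈ C, a ∈ S a := fun a ha => ⟨ha, by simp⟩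
  have S_trans : ∀ {a b}, b ∈ S a → S b ⊆ S a := fun {a b} hb x hx =>
    ⟨hx.1, by linarith [dist_triangle x b a, hx.2, hb.2]⟩
  have S_closed : ∀ a, IsClosed (S a) := fun a =>
    hC.inter (isClosed_le (continuous_id.dist continuous_const) (hφ.sub continuous_const))
  have near_max : ∀ (n : ℕ) (a : α), ∃ b, a ∈ C →
      b ∈ S a ∧ ∀ x ∈ S a, φ x ≤ φ b + 1 / (n + 1) := by
    intro n a
    by_cases ha : a ∈ C
    · obtain ⟨b, hb, hmax⟩ := exists_mem_forall_le_add ⟨a, self_mem a ha⟩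
        (hbdd.mono (image_mono fun x hx => hx.1)) (Nat.one_div_pos_of_nat (n := n))
      exact ⟨b, fun _ => ⟨hb, hmax⟩⟩
    · exact ⟨a, fun h => absurd h ha⟩
  -- Each `c (n + 1)` nearly maximises `φ` on `S (c n)`, which squeezes `S (c (n + 1))` into a
  -- ball of radius `1 / (n + 1)`; the nested sets then shrink to the required point.
  choose F hF using near_max
  let c : ℕ → α := fun n => Nat.rec p F n
  have hcC : ∀ n, c n ∈ C := by
    intro n
    induction n with
    | zero => exact hp
    | succ n ih => exact ((hF n (c n) ih).1).1
  have anti : Antitone fun n => S (c n) :=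
    antitone_nat_of_succ_le fun n => S_trans (hF n (c n) (hcC n)).1
  have small : ∀ n, S (c (n + 1)) ⊆ Metric.closedBall (c (n + 1)) (1 / (n + 1)) := by
    intro n x hx
    have := (hF n (c n) (hcC n)).2 x (anti n.le_succ hx)
    rw [Metric.mem_closedBall]
    linarith [hx.2]
  obtain ⟨c', hc'⟩ : (⋂ n, S (c (n + 1))).Nonempty := by
    refine Metric.nonempty_iInter_of_nonempty_biInter (fun n => S_closed _)
      (fun n => Metric.isBounded_closedBall.subset (small n))
      (fun N => ⟨c (N + 1), mem_iInter₂.2 fun n hn =>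
        anti (Nat.succ_le_succ hn) (self_mem _ (hcC (N + 1)))⟩) ?_
    refine squeeze_zero (fun n => Metric.diam_nonneg)
      (fun n => Metric.diam_le_of_subset_closedBall (by positivity) (small n)) ?_
    simpa using (tendsto_one_div_add_atTop_nhds_zero_nat (𝕜 := ℝ)).const_mul 2
  rw [mem_iInter] at hc'
  have hc'0 : c' ∈ S p := anti (Nat.zero_le 1) (hc' 0)
  refine ⟨c', hc'0.1, hc'0.2, fun x hxC hx => eq_of_forall_dist_le fun ε hε => ?_⟩
  obtain ⟨n, hn⟩ := exists_nat_one_div_lt (half_pos hε)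
  have hxn := small n (S_trans (hc' n) ⟨hxC, hx⟩)
  have hc'n := small n (hc' n)
  rw [Metric.mem_closedBall] at hxn hc'n
  linarith [dist_triangle_right x c' (c (n + 1))]

end Ekeland

section BishopPhelps

variable {E : Type*} [NormedAddCommGroup E] [NormedSpace ℝ E]

theorem notMem_interior_of_forall_apply_le {S : Set E} {h : StrongDual ℝ E} (hh : h ≠ 0) {p : E}
    (hp : ∀ s ∈ S, h s ≤ h p) : p ∉ interior S := fun hint =>
  hh (IsLocalMax.hasFDerivAt_eq_zero (Filter.mem_of_superset (mem_interior_iff_mem_nhds.1 hint) hp)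
    h.hasFDerivAt)

theorem exists_norm_lt_apply_of_one_lt_norm {f : StrongDual ℝ E} (hf : 1 < ‖f‖) :
    ∃ w, ‖w‖ < f w := by
  obtain ⟨w, hw, hfw⟩ := f.exists_lt_apply_of_lt_opNorm hf
  rcases le_or_gt 0 (f w) with h | h
  · rw [Real.norm_of_nonneg h] at hfw
    exact ⟨w, by linarith⟩
  · rw [Real.norm_eq_abs, abs_of_neg h] at hfw
    exact ⟨-w, by rw [norm_neg, map_neg]; linarith⟩

theorem exists_norm_eq_one_forall_apply_lt {C : Set E} (hC : IsClosed C) (hconv : Convex ℝ C)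
    (hne : C.Nonempty) {z : E} (hz : z ∉ C) :
    ∃ f : StrongDual ℝ E, ‖f‖ = 1 ∧ ∀ s ∈ C, f s < f z := by
  obtain ⟨f, u, hfu, huz⟩ := geometric_hahn_banach_closed_point hconv hC hz
  have hf : f ≠ 0 := by
    rintro rfl
    obtain ⟨s, hs⟩ := hne
    simpa using (hfu s hs).trans huz
  refine ⟨‖f‖⁻¹ • f, norm_smul_inv_norm hf, fun s hs => ?_⟩
  simp only [smul_apply, smul_eq_mul]
  exact mul_lt_mul_of_pos_left ((hfu s hs).trans huz) (inv_pos.2 (norm_pos_iff.2 hf))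

theorem exists_ne_zero_forall_apply_le_of_forall_norm_sub_le {C : Set E} (hconv : Convex ℝ C)
    {f : StrongDual ℝ E} (hf : 1 < ‖f‖) {c : E} (hc : c ∈ C)
    (hmax : ∀ x ∈ C, ‖x - c‖ ≤ f x - f c → x = c) :
    ∃ h : StrongDual ℝ E, h ≠ 0 ∧ ∀ s ∈ C, h s ≤ h c := by
  set U : Set E := {x | ‖x - c‖ < f x - f c}
  have hU_open : IsOpen U := isOpen_lt (by fun_prop) (by fun_prop)
  have hU_convex : Convex ℝ U := by
    have hK := ((convexOn_univ_norm.sub (f.toLinearMap.concaveOn convex_univ)).convex_lt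
      0).translate_preimage_right (-c)
    convert hK using 1
    ext x
    simp [U, neg_add_eq_sub, map_sub]
  have hUC : Disjoint U C := Set.disjoint_left.2 fun x hxU hxC => by
    obtain rfl := hmax x hxC hxU.le
    simp [U] at hxU
  obtain ⟨w, hw⟩ := exists_norm_lt_apply_of_one_lt_norm hf
  have hray : ∀ t : ℝ, 0 < t → c + t • w ∈ U := fun t ht => by
    show ‖c + t • w - c‖ < f (c + t • w) - f c
    rw [add_sub_cancel_left, norm_smul, map_add, map_smul, smul_eq_mul, Real.norm_of_nonneg ht.le]
    nlinarith
  have hcU : c ∈ closure U := by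
    refine mem_closure_of_tendsto (f := fun t : ℝ => c + t • w) (b := 𝓝[>] 0) ?_
      (eventually_nhdsWithin_of_forall hray)
    have hcont : Continuous fun t : ℝ => c + t • w := by fun_prop
    simpa using (hcont.tendsto 0).mono_left nhdsWithin_le_nhds
  obtain ⟨g, u, hgU, hgC⟩ := geometric_hahn_banach_open hU_convex hU_open hconv hUC
  have hgc : g c ≤ u :=
    closure_minimal (fun a ha => (hgU a ha).le) (isClosed_le g.continuous continuous_const) hcU
  refine ⟨-g, fun hg => ?_, fun s hs => ?_⟩
  · have hg0 : g = 0 := neg_eq_zero.1 hg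
    have h₁ := hgU _ (hray 1 one_pos)
    have h₂ := hgC c hc
    simp only [hg0, zero_apply] at h₁ h₂
    linarith
  · simp only [neg_apply, neg_le_neg_iff]
    exact hgc.trans (hgC s hs)

/-- The Bishop–Phelps theorem. -/
theorem frontier_subset_closure_supportPoints [CompleteSpace E] {C : Set E} (hC : IsClosed C)
    (hconv : Convex ℝ C) :
    frontier C ⊆ closure {c ∈ C | ∃ h : StrongDual ℝ E, h ≠ 0 ∧ ∀ s ∈ C, h s ≤ h c} := by
  intro p hp
  have hpC : p ∈ C := hC.frontier_subset hp
  rw [frontier_eq_closure_inter_closure] at hp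
  refine Metric.mem_closure_iff.2 fun ε hε => ?_
  obtain ⟨z, hzC, hpz⟩ := Metric.mem_closure_iff.1 hp.2 (ε / 2) (half_pos hε)
  obtain ⟨f, hf, hfz⟩ := exists_norm_eq_one_forall_apply_lt hC hconv ⟨p, hpC⟩ hzC
  have hbound : ∀ s ∈ C, f s < f p + ε / 2 := fun s hs => by
    have : f z - f p ≤ dist p z := by
      rw [← map_sub, dist_comm, dist_eq_norm, ← one_mul ‖z - p‖, ← hf]
      exact (le_abs_self _).trans (f.le_opNorm _)
    linarith [hfz s hs]
  obtain ⟨c, hcC, hcp, hmax⟩ := exists_maximal_dist_le_sub hC ((2 : ℝ) • f).continuous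
    ⟨2 * (f p + ε / 2), forall_mem_image.2 fun s hs => by
      simpa using (mul_lt_mul_of_pos_left (hbound s hs) two_pos).le⟩ hpC
  have hf2 : 1 < ‖(2 : ℝ) • f‖ := by rw [norm_smul, hf]; norm_num
  refine ⟨c, ⟨hcC, exists_ne_zero_forall_apply_le_of_forall_norm_sub_le hconv hf2 hcC
    fun x hx hxc => hmax x hx (by rwa [dist_eq_norm])⟩, ?_⟩
  simp only [smul_apply, smul_eq_mul] at hcp
  rw [dist_comm]
  linarith [hbound c hcC]

end BishopPhelps

theorem coe_apply_eq_suppFn_iff {S : Set (StrongDual ℝ X)} {p : StrongDual ℝ X} (hp : p ∈ S)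
    (v : X) : ((p v : ℝ) : EReal) = suppFn S v ↔ ∀ s ∈ S, s v ≤ p v := by
  have hle : ((p v : ℝ) : EReal) ≤ suppFn S v :=
    le_iSup₂ (f := fun s (_ : s ∈ S) => ((s v : ℝ) : EReal)) p hp
  refine ⟨fun heq s hs => EReal.coe_le_coe_iff.1 ?_, fun hmax => le_antisymm hle ?_⟩
  · exact heq ▸ le_iSup₂ (f := fun s (_ : s ∈ S) => ((s v : ℝ) : EReal)) s hs
  · exact iSup₂_le fun s hs => EReal.coe_le_coe_iff.2 (hmax s hs)

theorem mem_face_iff {A : X → Set (StrongDual ℝ X)} {x v : X} {p : StrongDual ℝ X} :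
    p ∈ face A x v ↔ p ∈ A x ∧ ∀ s ∈ A x, s v ≤ p v :=
  ⟨fun ⟨hp, heq⟩ => ⟨hp, (coe_apply_eq_suppFn_iff hp v).1 heq⟩,
    fun ⟨hp, hmax⟩ => ⟨hp, (coe_apply_eq_suppFn_iff hp v).2 hmax⟩⟩

namespace IsMaxMonotoneOp

variable {A : X → Set (StrongDual ℝ X)}

theorem mem_iff (hA : IsMaxMonotoneOp A) {x : X} {p : StrongDual ℝ X} :
    p ∈ A x ↔ ∀ y, ∀ q ∈ A y, 0 ≤ (p - q) (x - y) := by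
  refine ⟨fun hp y q hq => hA.1 hp hq, fun h => ?_⟩
  let B : X → Set (StrongDual ℝ X) := fun y => A y ∪ {p' | y = x ∧ p' = p}
  have hB : IsMonotoneOp B := by
    rintro y z y' z' (hy' | ⟨rfl, rfl⟩) (hz' | ⟨rfl, rfl⟩)
    · exact hA.1 hy' hz'
    · have := h y y' hy'
      simp only [sub_apply, map_sub] at this ⊢
      linarith
    · exact h z z' hz'
    · simp
  have hpB : p ∈ B x := Or.inr ⟨rfl, rfl⟩
  rwa [hA.2 B hB fun y => subset_union_left] at hpB

theorem eq_iInter (hA : IsMaxMonotoneOp A) (x : X) :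
    A x = ⋂ y, ⋂ q ∈ A y, {p : StrongDual ℝ X | q (x - y) ≤ p (x - y)} := by
  ext p
  rw [hA.mem_iff]
  simp only [mem_iInter, mem_ofPred_eq, sub_apply, sub_nonneg]

theorem isClosed (hA : IsMaxMonotoneOp A) (x : X) : IsClosed (A x) := by
  rw [hA.eq_iInter x]
  exact isClosed_iInter fun y => isClosed_biInter fun q _ =>
    isClosed_le continuous_const (ContinuousLinearMap.apply ℝ ℝ (x - y)).continuous

theorem convex (hA : IsMaxMonotoneOp A) (x : X) : Convex ℝ (A x) := by
  rw [hA.eq_iInter x]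
  exact convex_iInter fun y => convex_iInter₂ fun q _ =>
    convex_halfSpace_ge (ContinuousLinearMap.apply ℝ ℝ (x - y)).isLinear _

end IsMaxMonotoneOp

theorem frontier_eq_closure_union_faces_general
    (hrefl : IsReflexiveSp X)
    (A : X → Set (StrongDual ℝ X)) (hA : IsMaxMonotoneOp A) :
    ∀ x ∈ opDom A,
      frontier (A x) = closure (⋃ v ∈ {v : X | v ≠ 0}, face A x v) := by
  intro x _
  apply Subset.antisymm
  · refine (frontier_subset_closure_supportPoints (hA.isClosed x) (hA.convex x)).trans
      (closure_mono ?_)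
    rintro c ⟨hc, h, hh, hmax⟩
    obtain ⟨v, rfl⟩ := hrefl h
    have hv : v ≠ 0 := by
      rintro rfl
      exact hh (map_zero _)
    exact mem_biUnion hv (mem_face_iff.2 ⟨hc, by simpa using hmax⟩)
  · refine closure_minimal (iUnion₂_subset fun v hv p hp => ?_) isClosed_frontier
    obtain ⟨hp, hmax⟩ := mem_face_iff.1 hp
    have hJv : NormedSpace.inclusionInDoubleDual ℝ X v ≠ 0 := fun h0 =>
      hv (SeparatingDual.eq_zero_of_forall_dual_eq_zero fun f => by
        simpa using congrArg (fun φ => φ f) h0)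
    exact ⟨subset_closure hp, notMem_interior_of_forall_apply_le hJv (by simpa using hmax)⟩

/-- In a reflexive Banach space, for a maximal monotone operator `A` and every
`x ∈ D(A)`, the norm-boundary of `Ax` equals the norm-closure of the union of all faces of `Ax`
in nonzero directions. -/
theorem frontier_eq_closure_union_faces
    [CompleteSpace X] (hrefl : IsReflexiveSp X)
    (A : X → Set (StrongDual ℝ X)) (hA : IsMaxMonotoneOp A) :
    ∀ x ∈ opDom A,
      frontier (A x) = closure (⋃ v ∈ {v : X | v ≠ 0}, face A x v) :=
  frontier_eq_closure_union_faces_general hrefl A hA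
end

section
/- Let X be a uniformly convex real Banach space whose topological dual X* is also uniformly convex, and let A : X ⇒ X* be a maximal monotone operator. For every x ∈ D(A), every v ∈ T(x; cl D(A)), and every pair of sequences t_n ↓ 0, w_n → v with x + t_n w_n ∈ D(A) for all n, one has σ_{Ax}(w_n) ≤ ⟨A°(x + t_n w_n), w_n⟩ for every n, and consequently σ_{Ax}(v) ≤ liminf_n ⟨A°(x + t_n w_n), w_n⟩. -/
/-!
Monotonicity of `A` between `(x, s)` and `(x + tₙwₙ, A°(x + tₙwₙ))`, divided by `tₙ > 0`, gives
`⟨s, wₙ⟩ ≤ ⟨A°(x + tₙwₙ), wₙ⟩` for every `s ∈ Ax`. The support function, a supremum of continuous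
linear functionals, is lower semicontinuous, which carries the bound to the `liminf`.
-/

open Filter Topology Pointwise

variable {X : Type*} [NormedAddCommGroup X] [NormedSpace ℝ X]

lemma IsMonotoneOp.apply_le_apply_of_mem_add_smul {A : X → Set (StrongDual ℝ X)}
    (hA : IsMonotoneOp A) {x w : X} {t : ℝ} (ht : 0 < t) {s q : StrongDual ℝ X}
    (hs : s ∈ A x) (hq : q ∈ A (x + t • w)) : s w ≤ q w := by
  have hmono : 0 ≤ (q - s) ((x + t • w) - x) := hA hq hs
  rw [add_sub_cancel_left, map_smul, smul_eq_mul, sub_apply] at hmono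
  nlinarith

lemma suppFn_le_coe_iff {S : Set (StrongDual ℝ X)} {v : X} {c : ℝ} :
    suppFn S v ≤ c ↔ ∀ s ∈ S, s v ≤ c := by
  simp only [suppFn, iSup₂_le_iff, EReal.coe_le_coe_iff]

lemma lowerSemicontinuous_suppFn (S : Set (StrongDual ℝ X)) : LowerSemicontinuous (suppFn S) :=
  lowerSemicontinuous_biSup fun s _ =>
    (continuous_coe_real_ereal.comp s.continuous).lowerSemicontinuous

lemma suppFn_le_liminf_of_tendsto {ι : Type*} {l : Filter ι} {S : Set (StrongDual ℝ X)}
    {w : ι → X} {v : X} (hw : Tendsto w l (𝓝 v)) :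
    suppFn S v ≤ liminf (fun i => suppFn S (w i)) l :=
  ((lowerSemicontinuous_suppFn S).le_liminf v).trans hw.liminf_le_liminf_comp

theorem suppFn_le_liminf_along_sequences_general
    (A : X → Set (StrongDual ℝ X)) (hA : IsMaxMonotoneOp A)
    (A0 : X → StrongDual ℝ X) (hA0 : IsMinNormSelection A A0) :
    ∀ x ∈ opDom A, ∀ v ∈ tanCone (closure (opDom A)) x,
      ∀ (t : ℕ → ℝ) (w : ℕ → X), (∀ n, 0 < t n) → Tendsto t atTop (𝓝 0) →
        Tendsto w atTop (𝓝 v) → (∀ n, x + t n • w n ∈ opDom A) →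
        (∀ n, suppFn (A x) (w n) ≤ (((A0 (x + t n • w n)) (w n) : ℝ) : EReal)) ∧
        suppFn (A x) v ≤
          liminf (fun n => (((A0 (x + t n • w n)) (w n) : ℝ) : EReal)) atTop := by
  intro x _ v _ t w ht _ hw hD
  have hpointwise (n : ℕ) :
      suppFn (A x) (w n) ≤ (((A0 (x + t n • w n)) (w n) : ℝ) : EReal) :=
    suppFn_le_coe_iff.2 fun _ hs =>
      hA.1.apply_le_apply_of_mem_add_smul (ht n) hs (hA0 _ (hD n)).1
  exact ⟨hpointwise,
    (suppFn_le_liminf_of_tendsto hw).trans (liminf_le_liminf (.of_forall hpointwise))⟩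

/-- In a uniformly convex Banach space with uniformly convex dual, for `x ∈ D(A)`,
`v ∈ T(x; cl D(A))` and sequences `t_n ↓ 0`, `w_n → v` with `x + t_n w_n ∈ D(A)`, one has
`σ_{Ax}(w_n) ≤ ⟨A°(x+t_n w_n), w_n⟩` for all `n` and hence
`σ_{Ax}(v) ≤ liminf_n ⟨A°(x+t_n w_n), w_n⟩`. -/
theorem suppFn_le_liminf_along_sequences
    [CompleteSpace X] [UniformConvexSpace X] [UniformConvexSpace (StrongDual ℝ X)]
    (A : X → Set (StrongDual ℝ X)) (hA : IsMaxMonotoneOp A)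
    (A0 : X → StrongDual ℝ X) (hA0 : IsMinNormSelection A A0) :
    ∀ x ∈ opDom A, ∀ v ∈ tanCone (closure (opDom A)) x,
      ∀ (t : ℕ → ℝ) (w : ℕ → X), (∀ n, 0 < t n) → Tendsto t atTop (𝓝 0) →
        Tendsto w atTop (𝓝 v) → (∀ n, x + t n • w n ∈ opDom A) →
        (∀ n, suppFn (A x) (w n) ≤ (((A0 (x + t n • w n)) (w n) : ℝ) : EReal)) ∧
        suppFn (A x) v ≤
          liminf (fun n => (((A0 (x + t n • w n)) (w n) : ℝ) : EReal)) atTop :=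
  suppFn_le_liminf_along_sequences_general A hA A0 hA0
end

section
/- Let X be a reflexive real Banach space and A : X ⇒ X* a maximal monotone operator whose domain has nonempty interior. Let x ∈ D(A) and let K be a nonempty norm-closed convex subset of Ax. Then the set K + N(x; cl D(A)) is norm-closed in X*. -/
open Filter Topology Pointwise

variable {X : Type*} [NormedAddCommGroup X] [NormedSpace ℝ X]

/-!
By Baire category, `A` is bounded by some `M` on a ball `B(y₀, r) ⊆ D(A)`. Against this ball,
monotonicity bounds the norm of every `k ∈ Ax` in terms of `k (x - y₀)`, and if `p ∈ N(x; cl D(A))`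
then `k (x - y₀) ≤ (k + p) (x - y₀)`. Hence if `kⱼ + pⱼ → q` with `kⱼ ∈ K`, the `kⱼ` are bounded and
have a weak-* cluster point `k`. By reflexivity the closed convex set `K` is weak-* closed, so
`k ∈ K`, and `q - k ∈ N(x; cl D(A))` because each `pⱼ = (kⱼ + pⱼ) - kⱼ` is.
-/

section Topology

variable {ι α β : Type*} [TopologicalSpace α] [TopologicalSpace β] {F : Filter ι}

lemma MapClusterPt.prodMk_of_tendsto {u : ι → α} {v : ι → β} {a : α} {b : β}
    (hu : MapClusterPt a F u) (hv : Tendsto v F (𝓝 b)) :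
    MapClusterPt (a, b) F fun i => (u i, v i) := by
  rw [((𝓝 a).basis_sets.prod_nhds (𝓝 b).basis_sets).mapClusterPt_iff_frequently]
  rintro ⟨s, t⟩ ⟨hs, ht⟩
  exact (hu.frequently hs).and_eventually (hv ht)

lemma MapClusterPt.le_of_tendsto [Preorder β] [OrderClosedTopology β] {φ : α → β}
    (hφ : Continuous φ) {u : ι → α} {a : α} (hu : MapClusterPt a F u) {c : ι → β} {b : β}
    (hc : Tendsto c F (𝓝 b)) (h : ∀ᶠ i in F, c i ≤ φ (u i)) : b ≤ φ a :=
  (isClosed_le continuous_snd (hφ.comp continuous_fst)).mem_of_mapClusterPt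
    (hu.prodMk_of_tendsto hc) h

lemma exists_nonempty_interior_of_subset_iUnion_of_isClosed [BaireSpace α] {U : Set α}
    (hU : IsOpen U) (hne : U.Nonempty) {C : ℕ → Set α} (hC : ∀ n, IsClosed (C n))
    (hUC : U ⊆ ⋃ n, C n) : ∃ n, (interior (C n)).Nonempty := by
  by_contra! h
  exact not_isMeagre_of_isOpen hU hne <|
    (isMeagre_iUnion fun n => ((hC n).isNowhereDense_iff.2 (h n)).isMeagre).mono hUC

end Topology

lemma StrongDual.exists_mapClusterPt_toWeakDual {ι : Type*} {F : Filter ι} [F.NeBot]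
    {u : ι → StrongDual ℝ X} {M : ℝ} (hu : ∀ i, ‖u i‖ ≤ M) :
    ∃ P : WeakDual ℝ X, ‖WeakDual.toStrongDual P‖ ≤ M ∧
      MapClusterPt P F fun i => StrongDual.toWeakDual (u i) := by
  obtain ⟨P, hPM, hP⟩ := (WeakDual.isCompact_closedBall 0 M).exists_mapClusterPt
    (f := F) (u := fun i => StrongDual.toWeakDual (u i))
    (le_principal_iff.2 <| mem_map.2 <| Eventually.of_forall fun i => by simpa using hu i)
  exact ⟨P, by simpa using hPM, hP⟩

lemma IsReflexiveSp.isClosed_preimage_toStrongDual (hrefl : IsReflexiveSp X)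
    {K : Set (StrongDual ℝ X)} (hKcl : IsClosed K) (hKco : Convex ℝ K) :
    IsClosed (WeakDual.toStrongDual ⁻¹' K : Set (WeakDual ℝ X)) := by
  rw [← isOpen_compl_iff, isOpen_iff_forall_mem_open]
  intro P hP
  obtain ⟨f, u, hfK, hfP⟩ := geometric_hahn_banach_closed_point hKco hKcl hP
  obtain ⟨z, rfl⟩ := hrefl f
  exact ⟨{g | u < g z}, fun g hg hgK => (hfK _ hgK).not_gt hg,
    isOpen_lt continuous_const (WeakDual.eval_continuous z), hfP⟩

lemma apply_sub_nonneg_of_mem_normalCone {S : Set X} {x y : X} {p : StrongDual ℝ X}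
    (hp : p ∈ normalCone S x) (hy : y ∈ S) : 0 ≤ p (x - y) := by
  have := hp.2 y hy
  rw [← neg_sub, map_neg] at this
  linarith

namespace IsMaxMonotoneOp

variable {A : X → Set (StrongDual ℝ X)}

lemma mem_of_forall_nonneg (hA : IsMaxMonotoneOp A) {y : X} {p : StrongDual ℝ X}
    (h : ∀ ⦃z : X⦄ ⦃z' : StrongDual ℝ X⦄, z' ∈ A z → 0 ≤ (p - z') (y - z)) : p ∈ A y := by
  set B : X → Set (StrongDual ℝ X) := fun z => A z ∪ {p' | z = y ∧ p' = p}
  have hB : IsMonotoneOp B := by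
    rintro a b a' b' (ha | ⟨rfl, rfl⟩) (hb | ⟨rfl, rfl⟩)
    · exact hA.1 ha hb
    · have := h ha
      simp only [sub_apply, map_sub] at this ⊢
      linarith
    · exact h hb
    · simp
  rw [← hA.2 B hB fun z => Set.subset_union_left]
  exact Or.inr ⟨rfl, rfl⟩

lemma mem_of_mapClusterPt (hA : IsMaxMonotoneOp A) {w : ℕ → X} {y : X}
    (hw : Tendsto w atTop (𝓝 y)) {p : ℕ → StrongDual ℝ X} (hp : ∀ j, p j ∈ A (w j)) {M : ℝ}
    (hpM : ∀ j, ‖p j‖ ≤ M) {P : WeakDual ℝ X}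
    (hP : MapClusterPt P atTop fun j => StrongDual.toWeakDual (p j)) :
    WeakDual.toStrongDual P ∈ A y := by
  refine hA.mem_of_forall_nonneg fun z z' hz' => ?_
  have hc : Tendsto (fun j => z' (w j - z) - M * ‖w j - y‖) atTop (𝓝 (z' (y - z))) := by
    simpa using ((z'.continuous.tendsto _).comp (hw.sub_const z)).sub
      ((hw.sub_const y).norm.const_mul M)
  have hlim : z' (y - z) ≤ P (y - z) := by
    refine hP.le_of_tendsto (WeakDual.eval_continuous (y - z)) hc <|
      Eventually.of_forall fun j => ?_
    have hmon : z' (w j - z) ≤ p j (w j - z) := by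
      simpa only [sub_apply, sub_nonneg] using hA.1 (hp j) hz'
    have hbd : p j (w j - y) ≤ M * ‖w j - y‖ :=
      (le_abs_self _).trans <| ((p j).le_opNorm _).trans <|
        mul_le_mul_of_nonneg_right (hpM j) (norm_nonneg _)
    have hsplit : p j (w j - z) = p j (w j - y) + p j (y - z) := by
      rw [← map_add, sub_add_sub_cancel]
    change _ ≤ p j (y - z)
    linarith
  simp only [sub_apply]
  exact sub_nonneg.2 hlim

lemma isClosed_setOf_exists_norm_le (hA : IsMaxMonotoneOp A) (M : ℝ) :
    IsClosed {y | ∃ p ∈ A y, ‖p‖ ≤ M} := by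
  refine isClosed_of_closure_subset fun y hy => ?_
  obtain ⟨w, hw, hwy⟩ := mem_closure_iff_seq_limit.1 hy
  choose p hp hpM using hw
  obtain ⟨P, hPM, hP⟩ := StrongDual.exists_mapClusterPt_toWeakDual (F := atTop) hpM
  exact ⟨_, hA.mem_of_mapClusterPt hwy hp hpM hP, hPM⟩

/-- Baire category: `D(A)` is the countable union of the closed sets on which `A` has an element
of norm at most `n`. -/
lemma exists_closedBall_bounded [CompleteSpace X] (hA : IsMaxMonotoneOp A)
    (hint : (interior (opDom A)).Nonempty) :
    ∃ (y₀ : X) (r M : ℝ), 0 < r ∧ ∀ y ∈ Metric.closedBall y₀ r, ∃ p ∈ A y, ‖p‖ ≤ M := by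
  have hcover : interior (opDom A) ⊆ ⋃ n : ℕ, {y | ∃ p ∈ A y, ‖p‖ ≤ n} := by
    intro y hy
    obtain ⟨p, hp⟩ := interior_subset hy
    obtain ⟨n, hn⟩ := exists_nat_ge ‖p‖
    exact Set.mem_iUnion.2 ⟨n, p, hp, hn⟩
  obtain ⟨n, y₀, hy₀⟩ := exists_nonempty_interior_of_subset_iUnion_of_isClosed isOpen_interior
    hint (fun n => hA.isClosed_setOf_exists_norm_le n) hcover
  obtain ⟨r, hr, hball⟩ :=
    Metric.nhds_basis_closedBall.mem_iff.1 (mem_interior_iff_mem_nhds.1 hy₀)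
  exact ⟨y₀, r, n, hr, hball⟩

end IsMaxMonotoneOp

/-- For `‖b‖ = 1`, monotonicity against `p ∈ A (y₀ + r • b)` gives
`f (x - y₀) - r * f b ≥ p (x - y₀ - r • b) ≥ -M * (‖x - y₀‖ + r)`. -/
lemma IsMonotoneOp.norm_le_of_apply_le {A : X → Set (StrongDual ℝ X)} (hA : IsMonotoneOp A)
    {x y₀ : X} {r M a : ℝ} (hr : 0 < r) (hsel : ∀ y ∈ Metric.closedBall y₀ r, ∃ p ∈ A y, ‖p‖ ≤ M)
    {f : StrongDual ℝ X} (hf : f ∈ A x) (ha : f (x - y₀) ≤ a) :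
    ‖f‖ ≤ (a + M * (‖x - y₀‖ + r)) / r := by
  obtain ⟨p₀, hp₀, hp₀M⟩ := hsel y₀ (Metric.mem_closedBall_self hr.le)
  have hM : 0 ≤ M := (norm_nonneg p₀).trans hp₀M
  have hup : ∀ b : X, ‖b‖ = 1 → f b ≤ (a + M * (‖x - y₀‖ + r)) / r := by
    intro b hb
    obtain ⟨p, hp, hpM⟩ := hsel (y₀ + r • b) (by simp [dist_eq_norm, norm_smul, hb, abs_of_pos hr])
    have hmon : p (x - (y₀ + r • b)) ≤ f (x - (y₀ + r • b)) := by
      simpa only [sub_apply, sub_nonneg] using hA hf hp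
    have hpb : |p (x - (y₀ + r • b))| ≤ M * (‖x - y₀‖ + r) := calc
      |p (x - (y₀ + r • b))| ≤ ‖p‖ * ‖x - y₀ - r • b‖ := by
        rw [sub_add_eq_sub_sub]; exact p.le_opNorm _
      _ ≤ M * (‖x - y₀‖ + r) := by
        gcongr
        refine (norm_sub_le _ _).trans ?_
        simp [norm_smul, hb, abs_of_pos hr]
    have hfb : f (x - (y₀ + r • b)) = f (x - y₀) - r * f b := by
      rw [← sub_sub, map_sub, map_smul, smul_eq_mul]
    rw [le_div_iff₀ hr]
    linarith [neg_abs_le (p (x - (y₀ + r • b)))]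
  refine f.opNorm_le_of_unit_norm ?_ fun b hb => abs_le.2 ⟨?_, hup b hb⟩
  · have hmon : p₀ (x - y₀) ≤ f (x - y₀) := by
      simpa only [sub_apply, sub_nonneg] using hA hf hp₀
    have hp₀x : -(M * ‖x - y₀‖) ≤ p₀ (x - y₀) := neg_le_of_abs_le <|
      (p₀.le_opNorm _).trans (mul_le_mul_of_nonneg_right hp₀M (norm_nonneg _))
    exact div_nonneg (by linarith [mul_nonneg hM hr.le]) hr.le
  · have hneg := hup (-b) (by rw [norm_neg, hb])
    rw [map_neg] at hneg
    linarith

theorem sum_with_normalCone_isClosed_general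
    [CompleteSpace X] (hrefl : IsReflexiveSp X)
    (A : X → Set (StrongDual ℝ X)) (hA : IsMaxMonotoneOp A)
    (hint : (interior (opDom A)).Nonempty)
    (x : X) (hx : x ∈ opDom A) (K : Set (StrongDual ℝ X))
    (hKcl : IsClosed K) (hKco : Convex ℝ K) (hKA : K ⊆ A x) :
    IsClosed (K + normalCone (closure (opDom A)) x) := by
  obtain ⟨y₀, r, M, hr, hsel⟩ := hA.exists_closedBall_bounded hint
  obtain ⟨p₀, hp₀, -⟩ := hsel y₀ (Metric.mem_closedBall_self hr.le)
  rw [← isSeqClosed_iff_isClosed]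
  intro s q hmem hs
  choose k hkK p hpN hkp using fun j => Set.mem_add.1 (hmem j)
  obtain ⟨B, hB⟩ := hs.norm.bddAbove_range
  have hk_bdd : ∀ j, ‖k j‖ ≤ (B * ‖x - y₀‖ + M * (‖x - y₀‖ + r)) / r := by
    refine fun j => hA.1.norm_le_of_apply_le hr hsel (hKA (hkK j)) ?_
    have hp := apply_sub_nonneg_of_mem_normalCone (hpN j) (subset_closure ⟨p₀, hp₀⟩)
    calc k j (x - y₀) ≤ s j (x - y₀) := by rw [← hkp j, add_apply]; linarith
      _ ≤ ‖s j‖ * ‖x - y₀‖ := (le_abs_self _).trans ((s j).le_opNorm _)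
      _ ≤ B * ‖x - y₀‖ := by gcongr; exact hB (Set.mem_range_self j)
  obtain ⟨k₀, -, hk₀⟩ := StrongDual.exists_mapClusterPt_toWeakDual (F := atTop) hk_bdd
  have hk₀K : WeakDual.toStrongDual k₀ ∈ K :=
    (hrefl.isClosed_preimage_toStrongDual hKcl hKco).mem_of_mapClusterPt hk₀
      (Eventually.of_forall hkK)
  refine ⟨_, hk₀K, q - WeakDual.toStrongDual k₀, ⟨subset_closure hx, fun y hy => ?_⟩,
    add_sub_cancel _ _⟩
  have hsk : ∀ j, s j (y - x) ≤ k j (y - x) := fun j => by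
    rw [← hkp j, add_apply]; linarith [(hpN j).2 y hy]
  have hq : q (y - x) ≤ k₀ (y - x) := hk₀.le_of_tendsto (WeakDual.eval_continuous (y - x))
    (((ContinuousLinearMap.apply ℝ ℝ (y - x)).continuous.tendsto q).comp hs)
    (Eventually.of_forall hsk)
  rw [sub_apply]
  exact sub_nonpos.2 hq

/-- For a maximal monotone `A` with `int D(A) ≠ ∅` on a reflexive Banach space,
`x ∈ D(A)` and a nonempty closed convex `K ⊆ Ax`, the set `K + N(x; cl D(A))` is norm-closed. -/
theorem sum_with_normalCone_isClosed
    [CompleteSpace X] (hrefl : IsReflexiveSp X)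
    (A : X → Set (StrongDual ℝ X)) (hA : IsMaxMonotoneOp A)
    (hint : (interior (opDom A)).Nonempty)
    (x : X) (hx : x ∈ opDom A) (K : Set (StrongDual ℝ X))
    (hKne : K.Nonempty) (hKcl : IsClosed K) (hKco : Convex ℝ K) (hKA : K ⊆ A x) :
    IsClosed (K + normalCone (closure (opDom A)) x) :=
  sum_with_normalCone_isClosed_general hrefl A hA hint x hx K hKcl hKco hKA
end

section
/- Let X be a reflexive real Banach space and let A, B : X ⇒ X* be maximal monotone operators such that int D(A) = int D(B) ≠ ∅. If there exists a dense subset D of D(A) such that Ax ∩ Bx ≠ ∅ for every x ∈ D, then A = B (that is, Ax = Bx for every x ∈ X). -/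
open Filter Topology Pointwise

variable {X : Type*} [NormedAddCommGroup X] [NormedSpace ℝ X]

/-!
Local boundedness of monotone operators (Banach–Steinhaus) and weak-* compactness of dual balls
(Banach–Alaoglu) show that `A z ∩ B z ≠ ∅` at every point `z` of the common interior `U` of the
domains, since such `z` is a limit of points of `D`. A Hahn–Banach argument shows that the segment
from a point of `D(A)` to a point of `U` lies in `U` except possibly for its first endpoint.
Given `p ∈ B x` and `a ∈ A y`, the points `z_τ = (1 - τ) (x + y) / 2 + τ v` with `v ∈ U` therefore
lie in `U`; testing a common value `c ∈ A z_τ ∩ B z_τ` against `p`, `a` and a fixed `q ∈ A v`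
and letting `τ → 0` gives `⟨p - a, x - y⟩ ≥ 0`. Hence `B ⊆ A`, and maximality of `B` gives `A = B`.
-/

open Metric

section MonotoneOperator

variable {A B : X → Set (StrongDual ℝ X)}

theorem IsMonotoneOp.apply_sub_le (hA : IsMonotoneOp A) {y z : X} {q a : StrongDual ℝ X}
    (hq : q ∈ A y) (ha : a ∈ A z) : q (z - y) ≤ a (z - y) := by
  have h := hA hq ha
  simp only [sub_apply, map_sub] at h ⊢
  linarith

theorem IsMaxMonotoneOp.mem_of_forall_nonneg_s15 (hA : IsMaxMonotoneOp A) {x : X}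
    {p : StrongDual ℝ X} (h : ∀ y, ∀ q ∈ A y, 0 ≤ (p - q) (x - y)) : p ∈ A x := by
  let A' : X → Set (StrongDual ℝ X) := fun z => A z ∪ {q | z = x ∧ q = p}
  have hmono : IsMonotoneOp A' := by
    rintro z w q₁ q₂ (h₁ | ⟨rfl, rfl⟩) (h₂ | ⟨rfl, rfl⟩)
    · exact hA.1 h₁ h₂
    · have := h z q₁ h₁
      simp only [sub_apply, map_sub] at this ⊢
      linarith
    · exact h w q₂ h₂
    · simp
  rw [← hA.2 A' hmono fun z => Set.subset_union_left]
  exact Or.inr ⟨rfl, rfl⟩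

theorem exists_forall_norm_apply_le_of_ball {ι : Type*} {g : ι → StrongDual ℝ X} {ρ : ℝ}
    (hρ : 0 < ρ) (h : ∀ u ∈ ball (0 : X) ρ, ∃ C, ∀ i, g i u ≤ C) (u : X) :
    ∃ C, ∀ i, ‖g i u‖ ≤ C := by
  set δ := ρ / (‖u‖ + 1)
  have hδ : 0 < δ := by positivity
  have hδu : δ • u ∈ ball (0 : X) ρ := by
    rw [mem_ball_zero_iff, norm_smul, Real.norm_of_nonneg hδ.le, div_mul_eq_mul_div,
      div_lt_iff₀ (by positivity)]
    nlinarith [norm_nonneg u]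
  obtain ⟨C₁, hC₁⟩ := h _ hδu
  obtain ⟨C₂, hC₂⟩ := h (-(δ • u)) (by simpa using hδu)
  refine ⟨max C₁ C₂ / δ, fun i => ?_⟩
  have h₁ := hC₁ i
  have h₂ := hC₂ i
  simp only [map_neg, map_smul, smul_eq_mul] at h₁ h₂
  rw [Real.norm_eq_abs, le_div_iff₀ hδ, ← abs_of_pos hδ, ← abs_mul, mul_comm]
  exact abs_le.2 ⟨by linarith [le_max_right C₁ C₂], h₁.trans (le_max_left _ _)⟩

theorem IsMonotoneOp.apply_le_of_norm_lt (hA : IsMonotoneOp A) {v w u : X} {q b : StrongDual ℝ X}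
    (hq : q ∈ A w) (hb : b ∈ A (v + u)) {ρ : ℝ} (hw : ‖w - v‖ < ρ) (hu : ‖u‖ < ρ) :
    q u ≤ ‖q‖ * ‖w - v‖ + 2 * ρ * ‖b‖ := by
  have h₁ : q (w - v) ≤ ‖q‖ * ‖w - v‖ := (le_abs_self _).trans (q.le_opNorm _)
  have h₂ : b (v + u - w) ≤ ‖b‖ * (2 * ρ) := by
    refine (le_abs_self _).trans ((b.le_opNorm _).trans ?_)
    gcongr
    calc ‖v + u - w‖ = ‖u - (w - v)‖ := by congr 1; abel
      _ ≤ ‖u‖ + ‖w - v‖ := norm_sub_le _ _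
      _ ≤ 2 * ρ := by linarith
  have h₃ : q (v + u - w) = q u - q (w - v) := by rw [← map_sub]; congr 1; abel
  linarith [hA.apply_sub_le hq hb]

/-- The functionals `q / (1 + ‖q‖ ‖w - v‖)`, `q ∈ A w`, are pointwise bounded by monotonicity,
hence uniformly bounded by Banach–Steinhaus. -/
theorem IsMonotoneOp.exists_ball_bound [CompleteSpace X] (hA : IsMonotoneOp A) {v : X}
    (hv : v ∈ interior (opDom A)) :
    ∃ r > 0, ∃ M, ball v r ⊆ opDom A ∧ ∀ w ∈ ball v r, ∀ q ∈ A w, ‖q‖ ≤ M := by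
  obtain ⟨ρ, hρ, hball⟩ := Metric.mem_nhds_iff.1 (mem_interior_iff_mem_nhds.1 hv)
  let ι := {e : X × StrongDual ℝ X // e.1 ∈ ball v ρ ∧ e.2 ∈ A e.1}
  let c : ι → ℝ := fun e => 1 + ‖e.1.2‖ * ‖e.1.1 - v‖
  have hc : ∀ e, 0 < c e := fun e => by positivity
  let g : ι → StrongDual ℝ X := fun e => (c e)⁻¹ • e.1.2
  have hg : ∀ u ∈ ball (0 : X) ρ, ∃ C, ∀ e, g e u ≤ C := by
    intro u hu
    have hu' : ‖u‖ < ρ := by simpa using hu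
    obtain ⟨b, hb⟩ := hball (show v + u ∈ ball v ρ by simpa using hu)
    refine ⟨1 + 2 * ρ * ‖b‖, fun e => ?_⟩
    obtain ⟨⟨w, q⟩, hw, hq⟩ := e
    have hw' : ‖w - v‖ < ρ := by simpa [dist_eq_norm] using hw
    have hqu := hA.apply_le_of_norm_lt hq hb hw' hu'
    change (c ⟨⟨w, q⟩, hw, hq⟩)⁻¹ * q u ≤ _
    rw [inv_mul_le_iff₀ (hc _)]
    nlinarith [mul_nonneg (mul_nonneg (norm_nonneg q) (norm_nonneg (w - v)))
      (mul_nonneg hρ.le (norm_nonneg b))]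
  obtain ⟨K, hK⟩ := banach_steinhaus (exists_forall_norm_apply_le_of_ball hρ hg)
  set K₀ := max K 0 + 1
  have hK₀ : 0 < K₀ := by positivity
  refine ⟨min ρ (2 * K₀)⁻¹, lt_min hρ (by positivity), 2 * K₀,
    (ball_subset_ball (min_le_left _ _)).trans hball, fun w hw q hq => ?_⟩
  have hwv : K₀ * ‖w - v‖ ≤ 1 / 2 := by
    have : ‖w - v‖ < (2 * K₀)⁻¹ := by
      rw [← dist_eq_norm]; exact lt_of_lt_of_le hw (min_le_right _ _)
    calc K₀ * ‖w - v‖ ≤ K₀ * (2 * K₀)⁻¹ := by gcongr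
      _ = 1 / 2 := by field_simp
  let e : ι := ⟨⟨w, q⟩, ball_subset_ball (min_le_left _ _) hw, hq⟩
  have hq' : ‖q‖ ≤ K₀ * c e := by
    have : ‖g e‖ ≤ K₀ := (hK e).trans (by simp only [K₀]; linarith [le_max_left K 0])
    rwa [norm_smul, Real.norm_eq_abs, abs_inv, abs_of_pos (hc e), inv_mul_le_iff₀ (hc e),
      mul_comm] at this
  simp only [c, e] at hq'
  nlinarith [norm_nonneg q]

/-- `p` extends `0` from the zero subspace under the sublinear function
`w ↦ inf_{k ∈ K} (R ‖w + k.1‖ - k.2)`. -/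
theorem exists_dual_norm_le_of_cone (K : PointedCone ℝ (X × ℝ)) {R : ℝ} (hR : 0 ≤ R)
    (hK : ∀ k ∈ K, k.2 ≤ R * ‖k.1‖) :
    ∃ p : StrongDual ℝ X, ‖p‖ ≤ R ∧ ∀ k ∈ K, k.2 ≤ p k.1 := by
  let f : X → K → ℝ := fun w k => R * ‖w + k.1.1‖ - k.1.2
  let N : X → ℝ := fun w => ⨅ k, f w k
  have hbdd : ∀ w, BddBelow (Set.range (f w)) := fun w => ⟨-(R * ‖w‖), by
    rintro _ ⟨k, rfl⟩
    have h₁ := hK k.1 k.2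
    have h₂ : ‖k.1.1‖ ≤ ‖w + k.1.1‖ + ‖w‖ := by
      simpa using norm_sub_le (w + k.1.1) w
    simp only [f]
    nlinarith⟩
  have N_le : ∀ w, ∀ k ∈ K, N w ≤ R * ‖w + k.1‖ - k.2 := fun w k hk =>
    ciInf_le (hbdd w) ⟨k, hk⟩
  have le_N : ∀ w b, (∀ k ∈ K, b ≤ R * ‖w + k.1‖ - k.2) → b ≤ N w := fun w b h =>
    le_ciInf fun k => h k.1 k.2
  have N_smul_le : ∀ a : ℝ, 0 < a → ∀ w, N (a • w) ≤ a * N w := by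
    intro a ha w
    rw [← div_le_iff₀' ha]
    refine le_N w _ fun k hk => ?_
    rw [div_le_iff₀' ha]
    have := N_le (a • w) _ (K.smul_mem ha.le hk)
    simp only [Prod.smul_fst, Prod.smul_snd, smul_eq_mul, ← smul_add,
      norm_smul, Real.norm_of_nonneg ha.le] at this
    linarith
  have N_smul : ∀ a : ℝ, 0 < a → ∀ w, N (a • w) = a * N w := by
    refine fun a ha w => le_antisymm (N_smul_le a ha w) ?_
    have := N_smul_le a⁻¹ (inv_pos.2 ha) (a • w)
    rw [inv_smul_smul₀ ha.ne'] at this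
    rwa [← le_inv_mul_iff₀ ha]
  have N_add : ∀ w₁ w₂, N (w₁ + w₂) ≤ N w₁ + N w₂ := by
    intro w₁ w₂
    rw [← sub_le_iff_le_add']
    refine le_N w₂ _ fun k₂ hk₂ => ?_
    rw [sub_le_comm]
    refine le_N w₁ _ fun k₁ hk₁ => ?_
    have h := N_le (w₁ + w₂) _ (K.add_mem hk₁ hk₂)
    have : ‖w₁ + w₂ + (k₁ + k₂).1‖ ≤ ‖w₁ + k₁.1‖ + ‖w₂ + k₂.1‖ := by
      simpa [add_add_add_comm] using norm_add_le (w₁ + k₁.1) (w₂ + k₂.1)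
    simp only [Prod.fst_add, Prod.snd_add] at h this
    nlinarith
  obtain ⟨g, -, hg⟩ := exists_extension_of_le_sublinear ⟨⊥, 0⟩ N N_smul N_add fun x => by
    obtain ⟨x, hx⟩ := x
    rw [Submodule.mem_bot] at hx
    subst hx
    exact le_N 0 0 fun k hk => by simpa using hK k hk
  have hg_le : ∀ w, g w ≤ R * ‖w‖ := fun w =>
    (hg w).trans ((N_le w 0 K.zero_mem).trans (by simp))
  have hg_norm : ∀ w, ‖g w‖ ≤ R * ‖w‖ := fun w =>
    abs_le.2 ⟨neg_le.1 (by simpa using hg_le (-w)), hg_le w⟩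
  refine ⟨g.mkContinuous R hg_norm, LinearMap.mkContinuous_norm_le g hR hg_norm,
    fun k hk => ?_⟩
  have := (hg (-k.1)).trans (N_le (-k.1) k hk)
  simp only [neg_add_cancel, norm_zero, mul_zero, zero_sub, map_neg, neg_le_neg_iff] at this
  exact this

theorem IsMaxMonotoneOp.mem_opDom_of_forall_sum_le (hA : IsMaxMonotoneOp A) {z : X} {R : ℝ}
    (hR : 0 ≤ R) (h : ∀ (n : ℕ) (y : Fin n → X) (q : Fin n → StrongDual ℝ X),
      (∀ i, q i ∈ A (y i)) → ∀ l : Fin n → ℝ, (∀ i, 0 ≤ l i) →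
        ∑ i, l i * q i (z - y i) ≤ R * ‖∑ i, l i • (z - y i)‖) :
    z ∈ opDom A := by
  let K : PointedCone ℝ (X × ℝ) :=
    PointedCone.hull ℝ {k | ∃ y, ∃ q ∈ A y, k = (z - y, q (z - y))}
  have hK : ∀ k ∈ K, k.2 ≤ R * ‖k.1‖ := by
    intro k hk
    obtain ⟨n, f, g, rfl⟩ := Submodule.mem_span_set'.1 hk
    choose y q hq hg using fun i => (g i).2
    simpa [hg, ← Nonneg.coe_smul, Prod.fst_sum, Prod.snd_sum] using
      h n y q hq (fun i => f i) fun i => (f i).2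
  obtain ⟨p, -, hp⟩ := exists_dual_norm_le_of_cone K hR hK
  refine ⟨p, hA.mem_of_forall_nonneg_s15 fun y q hq => ?_⟩
  have := hp _ (PointedCone.subset_hull ⟨y, q, hq, rfl⟩)
  simp only [sub_apply]
  linarith

section Families

variable {ι : Type*} [Fintype ι] {y : ι → X} {q : ι → StrongDual ℝ X} {l : ι → ℝ}

theorem IsMonotoneOp.sum_sum_mul_apply_sub_nonneg (hA : IsMonotoneOp A)
    (hq : ∀ i, q i ∈ A (y i)) (hl : ∀ i, 0 ≤ l i) :
    0 ≤ ∑ i, ∑ j, l i * l j * q i (y i - y j) := by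
  have hsymm : ∑ i, ∑ j, l i * l j * q i (y i - y j) = ∑ i, ∑ j, l i * l j * q j (y j - y i) := by
    rw [Finset.sum_comm]
    simp only [mul_comm (l _) (l _)]
  have hpair : 0 ≤ ∑ i, ∑ j, l i * l j * (q i - q j) (y i - y j) :=
    Finset.sum_nonneg fun i _ => Finset.sum_nonneg fun j _ =>
      mul_nonneg (mul_nonneg (hl i) (hl j)) (hA (hq i) (hq j))
  have hsplit : ∑ i, ∑ j, l i * l j * (q i - q j) (y i - y j) =
      ∑ i, ∑ j, l i * l j * q i (y i - y j) + ∑ i, ∑ j, l i * l j * q j (y j - y i) := by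
    rw [← Finset.sum_add_distrib]
    refine Finset.sum_congr rfl fun i _ => ?_
    rw [← Finset.sum_add_distrib]
    refine Finset.sum_congr rfl fun j _ => ?_
    simp only [sub_apply, map_sub]
    ring
  linarith

theorem IsMonotoneOp.sum_mul_sum_mul_apply_le (hA : IsMonotoneOp A)
    (hq : ∀ i, q i ∈ A (y i)) (hl : ∀ i, 0 ≤ l i) (z : X) :
    (∑ i, l i) * ∑ i, l i * q i (z - y i) ≤ (∑ i, l i • q i) (∑ i, l i • (z - y i)) := by
  have e₁ : (∑ i, l i • q i) (∑ j, l j • (z - y j)) = ∑ i, ∑ j, l i * l j * q i (z - y j) := by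
    simp only [map_sum, map_smul, FunLike.coe_sum, Finset.sum_apply, FunLike.coe_smul,
      Pi.smul_apply, smul_eq_mul, Finset.mul_sum]
    rw [Finset.sum_comm]
    exact Finset.sum_congr rfl fun _ _ => Finset.sum_congr rfl fun _ _ => by ring
  have e₂ : (∑ i, l i) * ∑ i, l i * q i (z - y i) = ∑ i, ∑ j, l i * l j * q i (z - y i) := by
    simp only [Finset.sum_mul, Finset.mul_sum]
    exact Finset.sum_congr rfl fun _ _ => Finset.sum_congr rfl fun _ _ => by ring
  have e₃ : ∑ i, ∑ j, l i * l j * q i (y i - y j) =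
      ∑ i, ∑ j, l i * l j * q i (z - y j) - ∑ i, ∑ j, l i * l j * q i (z - y i) := by
    simp only [← Finset.sum_sub_distrib, ← mul_sub, ← map_sub, sub_sub_sub_cancel_left]
  linarith [hA.sum_sum_mul_apply_sub_nonneg hq hl]

theorem IsMonotoneOp.sum_mul_apply_le_of_mem (hA : IsMonotoneOp A)
    (hq : ∀ i, q i ∈ A (y i)) (hl : ∀ i, 0 ≤ l i) (z : X) {w : X} {b : StrongDual ℝ X}
    (hb : b ∈ A w) :
    ∑ i, l i * q i (z - y i) ≤
      (∑ i, l i • q i) (z - w) + ‖b‖ * ((∑ i, l i) * ‖w - z‖ + ‖∑ i, l i • (z - y i)‖) := by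
  have h₁ : ∑ i, l i * q i (z - y i) ≤ (∑ i, l i • q i) (z - w) + b (∑ i, l i • (w - y i)) := by
    simp only [map_sum, map_smul, FunLike.coe_sum, Finset.sum_apply, FunLike.coe_smul,
      Pi.smul_apply, smul_eq_mul, ← Finset.sum_add_distrib, ← mul_add]
    refine Finset.sum_le_sum fun i _ => mul_le_mul_of_nonneg_left ?_ (hl i)
    have : q i (z - y i) = q i (z - w) + q i (w - y i) := by rw [← map_add]; congr 1; abel
    linarith [hA.apply_sub_le (hq i) hb]
  have h₂ : ∑ i, l i • (w - y i) = (∑ i, l i) • (w - z) + ∑ i, l i • (z - y i) := by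
    rw [Finset.sum_smul, ← Finset.sum_add_distrib]
    exact Finset.sum_congr rfl fun i _ => by rw [← smul_add]; congr 1; abel
  have h₃ : b (∑ i, l i • (w - y i)) ≤
      ‖b‖ * ((∑ i, l i) * ‖w - z‖ + ‖∑ i, l i • (z - y i)‖) := by
    refine (le_abs_self _).trans ((b.le_opNorm _).trans ?_)
    gcongr
    rw [h₂]
    refine (norm_add_le _ _).trans ?_
    rw [norm_smul, Real.norm_of_nonneg (Finset.sum_nonneg fun i _ => hl i)]
  linarith

end Families

theorem le_add_div_mul_of_mul_le_mul {c Λ S G n K R : ℝ} (hc : 0 < c) (hΛ : 0 ≤ Λ) (hK : 0 ≤ K)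
    (hR : 0 ≤ R) (hn : 0 ≤ n) (hG : 0 ≤ G) (h₁ : Λ * S ≤ G * n)
    (h₂ : c * G ≤ Λ * K + R * n - S) : S ≤ (R + K / c) * n := by
  suffices c * S ≤ (c * R + K) * n by
    rwa [show (R + K / c) * n = (c * R + K) * n / c by field_simp, le_div_iff₀' hc]
  by_cases hSR : S ≤ R * n
  · nlinarith
  rcases hΛ.eq_or_lt with rfl | hΛ
  · nlinarith
  have hGK : c * G ≤ Λ * K := by linarith
  have h : Λ * (c * S) ≤ Λ * (K * n) := by
    nlinarith [mul_le_mul_of_nonneg_left h₁ hc.le, mul_le_mul_of_nonneg_right hGK hn]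
  nlinarith [le_of_mul_le_mul_left h hΛ, mul_nonneg (mul_nonneg hc.le hR) hn]

theorem IsMonotoneOp.exists_sum_mul_apply_le_mul_norm (hA : IsMonotoneOp A) {x₀ w₀ : X}
    {a₀ : StrongDual ℝ X} (ha₀ : a₀ ∈ A x₀) {η M : ℝ} (hη : 0 < η)
    (hbd : ∀ w ∈ closedBall w₀ η, ∃ b ∈ A w, ‖b‖ ≤ M) {t : ℝ} (ht₀ : 0 < t) (ht₁ : t ≤ 1) :
    ∃ R, 0 ≤ R ∧ ∀ (n : ℕ) (y : Fin n → X) (q : Fin n → StrongDual ℝ X),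
      (∀ i, q i ∈ A (y i)) → ∀ l : Fin n → ℝ, (∀ i, 0 ≤ l i) →
        ∑ i, l i * q i ((1 - t) • x₀ + t • w₀ - y i) ≤
          R * ‖∑ i, l i • ((1 - t) • x₀ + t • w₀ - y i)‖ := by
  obtain ⟨b₀, -, hb₀⟩ := hbd w₀ (mem_closedBall_self hη.le)
  have hM : 0 ≤ M := (norm_nonneg _).trans hb₀
  have ht : 0 ≤ 1 - t := by linarith
  set z := (1 - t) • x₀ + t • w₀ with hz
  set K₀ := t * M * (‖w₀ - z‖ + η) + (1 - t) * ‖a₀‖ * ‖x₀ - z‖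
  set R₀ := t * M + (1 - t) * ‖a₀‖
  have hK₀ : 0 ≤ K₀ := by positivity
  have hR₀ : 0 ≤ R₀ := by positivity
  have htη : 0 < t * η := by positivity
  refine ⟨R₀ + K₀ / (t * η), by positivity, fun n y q hq l hl => ?_⟩
  set Λ := ∑ i, l i
  set S := ∑ i, l i * q i (z - y i)
  set g := ∑ i, l i • q i
  set u := ∑ i, l i • (z - y i)
  have hΛ : 0 ≤ Λ := Finset.sum_nonneg fun i _ => hl i
  -- Test `S` against `a₀ ∈ A x₀` and against bounded `b ∈ A (w₀ + η d)`; the combination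
  -- with weights `1 - t`, `t` isolates `g d`, since `z` is the same combination of `x₀, w₀`.
  have hdir : ∀ d : X, ‖d‖ ≤ 1 → t * η * g d ≤ Λ * K₀ + R₀ * ‖u‖ - S := by
    intro d hd
    have hηd : ‖η • d‖ ≤ η := by
      rw [norm_smul, Real.norm_of_nonneg hη.le]; exact mul_le_of_le_one_right hη.le hd
    obtain ⟨b, hb, hbM⟩ := hbd (w₀ + η • d) (by simpa [dist_eq_norm] using hηd)
    have h₁ := hA.sum_mul_apply_le_of_mem hq hl z hb
    have h₂ := hA.sum_mul_apply_le_of_mem hq hl z ha₀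
    have hb' : ‖b‖ * (Λ * ‖w₀ + η • d - z‖ + ‖u‖) ≤ M * (Λ * (‖w₀ - z‖ + η) + ‖u‖) := by
      have : ‖w₀ + η • d - z‖ ≤ ‖w₀ - z‖ + η := by
        rw [add_sub_right_comm]; exact (norm_add_le _ _).trans (by linarith)
      gcongr
    have hcomb : t * g (z - (w₀ + η • d)) + (1 - t) * g (z - x₀) = -(t * η * g d) := by
      simp only [hz, map_sub, map_add, map_smul, smul_eq_mul]
      ring
    nlinarith
  have hg : t * η * ‖g‖ ≤ Λ * K₀ + R₀ * ‖u‖ - S := by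
    rw [← le_div_iff₀' htη]
    refine ContinuousLinearMap.opNorm_le_of_unit_norm
      (div_nonneg (by simpa using hdir 0 (by simp)) htη.le) fun d hd => ?_
    rw [Real.norm_eq_abs, abs_le, neg_le, le_div_iff₀' htη, le_div_iff₀' htη]
    have := hdir (-d) (by simp [hd])
    rw [map_neg] at this
    exact ⟨by linarith, hdir d hd.le⟩
  have hS : Λ * S ≤ ‖g‖ * ‖u‖ :=
    (hA.sum_mul_sum_mul_apply_le hq hl z).trans ((le_abs_self _).trans (g.le_opNorm u))
  exact le_add_div_mul_of_mul_le_mul htη hΛ hK₀ hR₀ (norm_nonneg u) (norm_nonneg g) hS hg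

theorem IsMaxMonotoneOp.combo_mem_interior_opDom [CompleteSpace X]
    (hA : IsMaxMonotoneOp A) {x y : X} (hx : x ∈ opDom A)
    (hy : y ∈ interior (opDom A)) {a b : ℝ} (ha : 0 ≤ a) (hb : 0 < b) (hab : a + b = 1) :
    a • x + b • y ∈ interior (opDom A) := by
  obtain ⟨a₀, ha₀⟩ := hx
  obtain ⟨r, hr, M, hdom, hM⟩ := hA.1.exists_ball_bound hy
  obtain rfl : a = 1 - b := by linarith
  have hmem : ∀ w ∈ ball y (r / 2), (1 - b) • x + b • w ∈ opDom A := by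
    intro w hw
    have hbd : ∀ w' ∈ closedBall w (r / 2), ∃ c ∈ A w', ‖c‖ ≤ M := by
      intro w' hw'
      have hw'y : w' ∈ ball y r := by
        rw [mem_ball] at hw ⊢
        rw [mem_closedBall] at hw'
        linarith [dist_triangle w' w y]
      obtain ⟨c, hc⟩ := hdom hw'y
      exact ⟨c, hc, hM w' hw'y c hc⟩
    obtain ⟨R, hR, hsum⟩ :=
      hA.1.exists_sum_mul_apply_le_mul_norm ha₀ (half_pos hr) hbd hb (by linarith)
    exact hA.mem_opDom_of_forall_sum_le hR (hsum · · ·)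
  have hpre : (fun z => b⁻¹ • (z - (1 - b) • x)) ⁻¹' ball y (r / 2) ∈
      𝓝 ((1 - b) • x + b • y) := by
    have hcont : ContinuousAt (fun z => b⁻¹ • (z - (1 - b) • x)) ((1 - b) • x + b • y) := by
      fun_prop
    refine hcont.preimage_mem_nhds ?_
    simpa [hb.ne'] using ball_mem_nhds y (half_pos hr)
  rw [mem_interior_iff_mem_nhds]
  filter_upwards [hpre] with z hz
  simpa [smul_inv_smul₀ hb.ne'] using hmem _ hz

theorem IsMaxMonotoneOp.mem_of_tendsto (hA : IsMaxMonotoneOp A)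
    {α : Type*} {l : Filter α} [l.NeBot] {x : α → X} {c : α → StrongDual ℝ X} {z : X}
    {p : StrongDual ℝ X} {M : ℝ} (hc : ∀ᶠ a in l, c a ∈ A (x a)) (hM : ∀ᶠ a in l, ‖c a‖ ≤ M)
    (hx : Tendsto x l (𝓝 z))
    (hp : Tendsto (fun a => StrongDual.toWeakDual (c a)) l (𝓝 (StrongDual.toWeakDual p))) :
    p ∈ A z := by
  refine hA.mem_of_forall_nonneg_s15 fun y q hq => ge_of_tendsto ?_ (hc.mono fun a ha => hA.1 ha hq)
  have h₁ : Tendsto (fun a => c a (z - y)) l (𝓝 (p (z - y))) :=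
    ((WeakDual.eval_continuous (z - y)).tendsto _).comp hp
  have h₂ : Tendsto (fun a => c a (z - x a)) l (𝓝 0) := by
    refine squeeze_zero_norm' (hM.mono fun a ha => ?_) (by
      simpa using ((tendsto_const_nhds (x := z)).sub hx).norm.const_mul M)
    exact ((c a).le_opNorm _).trans (by gcongr)
  have h₃ : Tendsto (fun a => q (x a - y)) l (𝓝 (q (z - y))) :=
    (q.continuous.tendsto _).comp (hx.sub_const y)
  convert (h₁.sub h₂).sub h₃ using 1
  · ext a
    simp only [sub_apply, map_sub]
    ring
  · simp [sub_apply]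

theorem IsMaxMonotoneOp.inter_nonempty_of_mem_closure [CompleteSpace X]
    (hA : IsMaxMonotoneOp A) (hB : IsMaxMonotoneOp B)
    {D : Set X} (hmeet : ∀ x ∈ D, (A x ∩ B x).Nonempty) {z : X}
    (hz : z ∈ interior (opDom A)) (hzD : z ∈ closure D) : (A z ∩ B z).Nonempty := by
  obtain ⟨r, hr, M, -, hM⟩ := hA.1.exists_ball_bound hz
  choose! c hcA hcB using hmeet
  have := mem_closure_iff_nhdsWithin_neBot.1 hzD
  let 𝒰 := Ultrafilter.of (𝓝[D] z)
  have h𝒰 : (𝒰 : Filter X) ≤ 𝓝[D] z := Ultrafilter.of_le _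
  have hD : ∀ᶠ x in (𝒰 : Filter X), x ∈ D := h𝒰 self_mem_nhdsWithin
  have hbd : ∀ᶠ x in (𝒰 : Filter X), ‖c x‖ ≤ M := by
    filter_upwards [hD, h𝒰 (mem_nhdsWithin_of_mem_nhds (ball_mem_nhds z hr))] with x hxD hx
    exact hM x hx _ (hcA x hxD)
  obtain ⟨p, -, hp⟩ := (WeakDual.isCompact_closedBall (0 : StrongDual ℝ X) M).ultrafilter_le_nhds
    (𝒰.map fun x => StrongDual.toWeakDual (c x)) (by
      rw [Ultrafilter.coe_map, le_principal_iff, Filter.mem_map]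
      filter_upwards [hbd] with x hx
      simpa using hx)
  have hz : Tendsto id (𝒰 : Filter X) (𝓝 z) := h𝒰.trans nhdsWithin_le_nhds
  exact ⟨WeakDual.toStrongDual p, hA.mem_of_tendsto (hD.mono hcA) hbd hz hp,
    hB.mem_of_tendsto (hD.mono hcB) hbd hz hp⟩

theorem nonneg_of_forall_mul_le {K D : ℝ} (h : ∀ τ ∈ Set.Ioo (0 : ℝ) 1, τ * K ≤ (1 - τ) * D) :
    0 ≤ D := by
  have hlim : Tendsto (fun τ : ℝ => (1 - τ) * D - τ * K) (𝓝[>] 0) (𝓝 D) := by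
    have : Continuous fun τ : ℝ => (1 - τ) * D - τ * K := by fun_prop
    simpa using (this.tendsto 0).mono_left nhdsWithin_le_nhds
  refine ge_of_tendsto hlim ?_
  filter_upwards [Ioo_mem_nhdsGT zero_lt_one] with τ hτ
  linarith [h τ hτ]

theorem IsMonotoneOp.mul_le_mul_apply_of_mem_inter (hA : IsMonotoneOp A) (hB : IsMonotoneOp B)
    {x y v : X} {p a q c : StrongDual ℝ X}
    (hp : p ∈ B x) (ha : a ∈ A y) (hq : q ∈ A v) {τ : ℝ} (hτ : τ ∈ Set.Ioo (0 : ℝ) 1)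
    (hc : c ∈ A (((1 - τ) / 2) • (x + y) + τ • v) ∩ B (((1 - τ) / 2) • (x + y) + τ • v)) :
    τ * (2 * ((q - p) (x - v) + (q - a) (y - v))) ≤ (1 - τ) * (p - a) (x - y) := by
  have h₁ := hB hp hc.2
  have h₂ := hA hc.1 ha
  have h₃ := hA hc.1 hq
  simp only [sub_apply, map_sub, map_add, map_smul, smul_eq_mul] at h₁ h₂ h₃ ⊢
  -- `h₁ + h₂` leaves the term `2 τ c (m - v)`, `m` the midpoint of `x, y`; freed of its factor
  -- `1 - τ`, `h₃` bounds it below by `2 τ q (m - v)`, which no longer depends on `τ`.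
  have h₃' : 0 ≤ c x + c y - 2 * c v - (q x + q y - 2 * q v) := by
    have h1τ : 0 < (1 - τ) / 2 := by linarith [hτ.2]
    refine (mul_nonneg_iff_of_pos_left h1τ).1 ?_
    linarith
  nlinarith [mul_nonneg hτ.1.le h₃']

theorem IsMaxMonotoneOp.combo_mem_interior_opDom_of_interior_eq [CompleteSpace X]
    (hA : IsMaxMonotoneOp A) (hB : IsMaxMonotoneOp B)
    (hint : interior (opDom A) = interior (opDom B)) {x y v : X} (hx : x ∈ opDom B)
    (hy : y ∈ opDom A) (hv : v ∈ interior (opDom A)) {τ : ℝ} (hτ : τ ∈ Set.Ioo (0 : ℝ) 1) :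
    ((1 - τ) / 2) • (x + y) + τ • v ∈ interior (opDom A) := by
  obtain ⟨hτ₀, hτ₁⟩ := hτ
  have ht₀ : 0 < 2 * τ / (1 + τ) := by positivity
  have ht₁ : 2 * τ / (1 + τ) ≤ 1 := by rw [div_le_one (by linarith)]; linarith
  have hw := hB.combo_mem_interior_opDom hx (hint ▸ hv) (sub_nonneg.2 ht₁) ht₀
    (sub_add_cancel _ _)
  rw [← hint] at hw
  convert hA.combo_mem_interior_opDom hy hw (a := (1 - τ) / 2) (b := (1 + τ) / 2)
    (by linarith) (by linarith) (by ring) using 1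
  have e₁ : (1 + τ) / 2 * (1 - 2 * τ / (1 + τ)) = (1 - τ) / 2 := by field_simp; ring
  have e₂ : (1 + τ) / 2 * (2 * τ / (1 + τ)) = τ := by field_simp
  simp only [smul_add, smul_smul, e₁, e₂]
  abel

end MonotoneOperator

theorem unique_determination_on_dense_subset_general
    [CompleteSpace X]
    (A B : X → Set (StrongDual ℝ X))
    (hA : IsMaxMonotoneOp A) (hB : IsMaxMonotoneOp B)
    (hint : interior (opDom A) = interior (opDom B))
    (hne : (interior (opDom A)).Nonempty)
    (D : Set X) (hdense : opDom A ⊆ closure D)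
    (hmeet : ∀ x ∈ D, (A x ∩ B x).Nonempty) :
    A = B := by
  obtain ⟨v, hv⟩ := hne
  obtain ⟨q, hq⟩ := interior_subset hv
  have hBA : ∀ x, B x ⊆ A x := by
    intro x p hp
    refine hA.mem_of_forall_nonneg_s15 fun y a ha =>
      nonneg_of_forall_mul_le (K := 2 * ((q - p) (x - v) + (q - a) (y - v))) fun τ hτ => ?_
    have hz := hA.combo_mem_interior_opDom_of_interior_eq hB hint ⟨p, hp⟩ ⟨a, ha⟩ hv hτ
    obtain ⟨c, hc⟩ := hA.inter_nonempty_of_mem_closure hB hmeet hz (hdense (interior_subset hz))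
    exact hA.1.mul_le_mul_apply_of_mem_inter hB.1 hp ha hq hτ hc
  exact hB.2 A hA.1 hBA

/-- Unique determination on dense subsets: two maximal monotone operators on a
reflexive Banach space with equal nonempty interiors of domains whose values intersect on a
dense subset of `D(A)` coincide. -/
theorem unique_determination_on_dense_subset
    [CompleteSpace X] (hrefl : IsReflexiveSp X)
    (A B : X → Set (StrongDual ℝ X))
    (hA : IsMaxMonotoneOp A) (hB : IsMaxMonotoneOp B)
    (hint : interior (opDom A) = interior (opDom B))
    (hne : (interior (opDom A)).Nonempty)
    (D : Set X) (hD : D ⊆ opDom A) (hdense : opDom A ⊆ closure D)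
    (hmeet : ∀ x ∈ D, (A x ∩ B x).Nonempty) :
    A = B :=
  unique_determination_on_dense_subset_general A B hA hB hint hne D hdense hmeet
end

section
/- Let X be a reflexive real Banach space and f : X → ℝ a lower semicontinuous convex function that is finite everywhere. If there exist a dense subset D of X and ℓ ≥ 0 such that for every x ∈ D the subdifferential ∂f(x) contains an element of norm at most ℓ, then f is ℓ-Lipschitz continuous on X, i.e., |f(x) − f(y)| ≤ ℓ‖x − y‖ for all x, y ∈ X. -/
open Filter Topology Pointwise

variable {X : Type*} [NormedAddCommGroup X] [NormedSpace ℝ X]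

/-!
At a point `u` of `D` a subgradient of norm at most `ℓ` gives `f u ≤ f b + ℓ‖u - b‖` for every
`b`. Lower semicontinuity of `f` carries this inequality from the dense set `D` to every `u`.
-/

theorem LowerSemicontinuous.le_of_dense {α : Type*} [TopologicalSpace α] {f g : α → ℝ}
    (hf : LowerSemicontinuous f) (hg : Continuous g) {D : Set α} (hD : Dense D)
    (hle : ∀ x ∈ D, f x ≤ g x) (x : α) : f x ≤ g x := by
  have hclosed : IsClosed {z | f z + -g z ≤ 0} :=
    (hf.add hg.neg.lowerSemicontinuous).isClosed_preimage 0
  have hDsub : D ⊆ {z | f z + -g z ≤ 0} := fun z hz =>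
    show f z + -g z ≤ 0 by linarith [hle z hz]
  have hx : f x + -g x ≤ 0 := hclosed.closure_subset_iff.2 hDsub (hD.closure_eq ▸ Set.mem_univ x)
  linarith

theorem sub_le_mul_norm_sub_of_subgradient {f : X → ℝ} {x : X} {p : StrongDual ℝ X} {ℓ : ℝ}
    (hp : ‖p‖ ≤ ℓ) (hsub : ∀ y, p (y - x) ≤ f y - f x) (y : X) : f x - f y ≤ ℓ * ‖x - y‖ := by
  have hpxy : p (x - y) ≤ ℓ * ‖x - y‖ :=
    (le_abs_self _).trans (p.le_of_opNorm_le_of_le hp le_rfl)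
  have hswap : p (y - x) = -p (x - y) := by rw [← map_neg, neg_sub]
  linarith [hsub y]

theorem lipschitz_of_bounded_subgradients_on_dense_general
    (f : X → ℝ) (hlsc : LowerSemicontinuous f)
    (D : Set X) (hdense : Dense D) (ℓ : ℝ)
    (hsub : ∀ x ∈ D, ∃ p : StrongDual ℝ X, ‖p‖ ≤ ℓ ∧ ∀ y : X, p (y - x) ≤ f y - f x) :
    ∀ x y : X, |f x - f y| ≤ ℓ * ‖x - y‖ := by
  have hone_sided : ∀ a b : X, f a - f b ≤ ℓ * ‖a - b‖ := fun a b => by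
    have hle : ∀ u ∈ D, f u ≤ f b + ℓ * ‖u - b‖ := fun u hu => by
      obtain ⟨p, hp, hpu⟩ := hsub u hu
      linarith [sub_le_mul_norm_sub_of_subgradient hp hpu b]
    have hclosure := hlsc.le_of_dense (by fun_prop) hdense hle a
    linarith
  intro x y
  exact abs_sub_le_iff.2 ⟨hone_sided x y, norm_sub_rev x y ▸ hone_sided y x⟩

/-- If a finite-valued lsc convex function on a reflexive Banach space has, at
every point of a dense subset, a subgradient of norm at most `ℓ`, then it is `ℓ`-Lipschitz. -/
theorem lipschitz_of_bounded_subgradients_on_dense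
    [CompleteSpace X] (hrefl : IsReflexiveSp X)
    (f : X → ℝ) (hconv : ConvexOn ℝ Set.univ f) (hlsc : LowerSemicontinuous f)
    (D : Set X) (hdense : Dense D) (ℓ : ℝ) (hℓ : 0 ≤ ℓ)
    (hsub : ∀ x ∈ D, ∃ p : StrongDual ℝ X, ‖p‖ ≤ ℓ ∧ ∀ y : X, p (y - x) ≤ f y - f x) :
    ∀ x y : X, |f x - f y| ≤ ℓ * ‖x - y‖ :=
  lipschitz_of_bounded_subgradients_on_dense_general f hlsc D hdense ℓ hsub
end

section
/- Let X be a uniformly convex real Banach space whose topological dual X* is also uniformly convex with (single-valued) duality mapping J : X → X*, and let A : X ⇒ X* be a maximal monotone operator. Let x ∈ D(A), v ∈ X \ {0} and x* ∈ A(x;v), and define B : X ⇒ X* by By := Ay − J(v) − x*. Then B is maximal monotone with D(B) = D(A), −J(v) ∈ Bx, and ‖J(v)‖ ≤ ‖y* − J(v) − x*‖ for every y* ∈ Ax; consequently the minimal-norm selection of B satisfies B°x = −J(v). -/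
/-!
`B` is `A` translated by a constant, so it inherits maximal monotonicity and the domain.
Because `x*` maximises `⟨·, v⟩` on `Ax`, every `b ∈ Bx` satisfies `⟨b, v⟩ ≤ −⟨J(v), v⟩ = −‖v‖²`,
hence `‖b‖ ≥ ‖v‖ = ‖J(v)‖`: the element `−J(v)` has minimal norm in `Bx`. Maximality makes `Bx`
convex, and in the strictly convex space `X*` a convex set has at most one element of minimal norm.
-/

open Filter Topology Pointwise

variable {X : Type*} [NormedAddCommGroup X] [NormedSpace ℝ X]

section MonotoneOp

variable {A : X → Set (StrongDual ℝ X)}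

def addConstOp (A : X → Set (StrongDual ℝ X)) (c : StrongDual ℝ X) :
    X → Set (StrongDual ℝ X) :=
  fun y => (· + c) '' A y

@[simp]
theorem opDom_addConstOp (c : StrongDual ℝ X) : opDom (addConstOp A c) = opDom A := by
  ext y
  simp only [opDom, addConstOp, Set.mem_ofPred_eq, Set.image_nonempty]

theorem addConstOp_addConstOp (c d : StrongDual ℝ X) :
    addConstOp (addConstOp A c) d = addConstOp A (c + d) := by
  funext y
  simp only [addConstOp, Set.image_image, add_assoc]

theorem IsMonotoneOp.addConstOp (hA : IsMonotoneOp A) (c : StrongDual ℝ X) :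
    IsMonotoneOp (addConstOp A c) := by
  rintro x y - - ⟨x', hx', rfl⟩ ⟨y', hy', rfl⟩
  simpa only [add_sub_add_right_eq_sub] using hA hx' hy'

theorem IsMaxMonotoneOp.addConstOp (hA : IsMaxMonotoneOp A) (c : StrongDual ℝ X) :
    IsMaxMonotoneOp (addConstOp A c) := by
  refine ⟨hA.1.addConstOp c, fun B hB hAB => ?_⟩
  have hshift : _root_.addConstOp B (-c) = A :=
    hA.2 _ (hB.addConstOp (-c)) fun y q hq => ⟨q + c, hAB y ⟨q, hq, rfl⟩, add_neg_cancel_right q c⟩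
  rw [← hshift, addConstOp_addConstOp, neg_add_cancel]
  funext y
  simp only [_root_.addConstOp, add_zero, Set.image_id']

theorem IsMaxMonotoneOp.mem_of_forall_le (hA : IsMaxMonotoneOp A) {x : X}
    {m : StrongDual ℝ X} (hm : ∀ a, ∀ a' ∈ A a, 0 ≤ (a' - m) (a - x)) : m ∈ A x := by
  have hext : (fun y => A y ∪ {z | y = x ∧ z = m}) = A := by
    refine hA.2 _ ?_ fun y => Set.subset_union_left
    rintro a b a' b' (ha | ⟨rfl, rfl⟩) (hb | ⟨rfl, rfl⟩)
    · exact hA.1 ha hb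
    · exact hm a a' ha
    · have h := hm b b' hb
      simp only [sub_apply, map_sub] at h ⊢
      linarith
    · simp
  rw [← hext]
  exact Or.inr ⟨rfl, rfl⟩

theorem IsMaxMonotoneOp.convex_apply (hA : IsMaxMonotoneOp A) (x : X) : Convex ℝ (A x) := by
  intro q₁ hq₁ q₂ hq₂ s t hs ht hst
  refine hA.mem_of_forall_le fun a a' ha => ?_
  have h₁ := hA.1 ha hq₁
  have h₂ := hA.1 ha hq₂
  have hcomb : (a' - (s • q₁ + t • q₂)) (a - x) =
      s * (a' - q₁) (a - x) + t * (a' - q₂) (a - x) := by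
    simp only [sub_apply, add_apply, smul_apply, smul_eq_mul]
    linear_combination (a' (a - x)) * hst.symm
  rw [hcomb]
  positivity

theorem apply_le_of_mem_face {x v : X} {p q : StrongDual ℝ X} (hp : p ∈ face A x v)
    (hq : q ∈ A x) : q v ≤ p v := by
  have h : ((q v : ℝ) : EReal) ≤ suppFn (A x) v :=
    le_iSup₂ (f := fun s (_ : s ∈ A x) => ((s v : ℝ) : EReal)) q hq
  rw [← hp.2] at h
  exact_mod_cast h

end MonotoneOp

theorem norm_le_opNorm_of_sq_le_neg_apply {v : X} {f : StrongDual ℝ X}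
    (hf : ‖v‖ ^ 2 ≤ -f v) : ‖v‖ ≤ ‖f‖ := by
  have hbound : -f v ≤ ‖f‖ * ‖v‖ := (neg_le_abs _).trans (f.le_opNorm v)
  nlinarith [norm_nonneg v, norm_nonneg f]

theorem Convex.eq_of_forall_norm_le {E : Type*} [NormedAddCommGroup E] [NormedSpace ℝ E]
    [StrictConvexSpace ℝ E] {S : Set E} (hS : Convex ℝ S) {a b : E} (ha : a ∈ S) (hb : b ∈ S)
    (ha_min : ∀ q ∈ S, ‖a‖ ≤ ‖q‖) (hb_min : ∀ q ∈ S, ‖b‖ ≤ ‖q‖) : a = b := by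
  have hnorm : ‖a‖ = ‖b‖ := le_antisymm (ha_min b hb) (hb_min a ha)
  by_contra hne
  have hmid : (1 / 2 : ℝ) • (a + b) ∈ S := by
    simpa only [smul_add] using hS ha hb (by norm_num) (by norm_num) (by norm_num)
  exact (ha_min _ hmid).not_gt ((norm_midpoint_lt_iff hnorm).mpr hne)

theorem shifted_operator_minSelection_general
    [UniformConvexSpace (StrongDual ℝ X)]
    (J : X → StrongDual ℝ X)
    (hJ : ∀ y : X, (J y) y = ‖y‖ ^ 2 ∧ ‖J y‖ = ‖y‖)
    (A : X → Set (StrongDual ℝ X)) (hA : IsMaxMonotoneOp A)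
    (x : X) (v : X)
    (p : StrongDual ℝ X) (hp : p ∈ face A x v)
    (B : X → Set (StrongDual ℝ X)) (hB : ∀ y, B y = (fun q => q - J v - p) '' A y) :
    IsMaxMonotoneOp B ∧ opDom B = opDom A ∧ -(J v) ∈ B x ∧
      (∀ q ∈ A x, ‖J v‖ ≤ ‖q - J v - p‖) ∧
      (∀ Bm : X → StrongDual ℝ X, IsMinNormSelection B Bm → Bm x = -(J v)) := by
  have hB_shift : B = addConstOp A (-(J v + p)) := by
    funext y
    simp only [hB, addConstOp, sub_sub, ← sub_eq_add_neg]
  have hBmax : IsMaxMonotoneOp B := hB_shift ▸ hA.addConstOp _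
  have hnegJ : -(J v) ∈ B x := (hB x).symm ▸ ⟨p, hp.1, sub_sub_cancel_left p (J v)⟩
  have hnorm : ∀ q ∈ A x, ‖J v‖ ≤ ‖q - J v - p‖ := by
    intro q hq
    rw [(hJ v).2]
    refine norm_le_opNorm_of_sq_le_neg_apply ?_
    have hqp := apply_le_of_mem_face hp hq
    simp only [sub_apply, (hJ v).1]
    linarith
  refine ⟨hBmax, by rw [hB_shift, opDom_addConstOp], hnegJ, hnorm, fun Bm hBm => ?_⟩
  obtain ⟨hBm_mem, hBm_min⟩ := hBm x ⟨_, hnegJ⟩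
  refine (hBmax.convex_apply x).eq_of_forall_norm_le hBm_mem hnegJ hBm_min ?_
  rw [hB x]
  rintro - ⟨q, hq, rfl⟩
  simpa only [norm_neg] using hnorm q hq

/-- For `x* ∈ A(x;v)` and the (single-valued) duality mapping `J`, the shifted
operator `By = Ay − J(v) − x*` is maximal monotone with `D(B) = D(A)`, `−J(v) ∈ Bx`,
`‖J(v)‖ ≤ ‖y* − J(v) − x*‖` for all `y* ∈ Ax`, and consequently `B°x = −J(v)`. -/
theorem shifted_operator_minSelection
    [CompleteSpace X] [UniformConvexSpace X] [UniformConvexSpace (StrongDual ℝ X)]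
    (J : X → StrongDual ℝ X)
    (hJ : ∀ y : X, (J y) y = ‖y‖ ^ 2 ∧ ‖J y‖ = ‖y‖)
    (A : X → Set (StrongDual ℝ X)) (hA : IsMaxMonotoneOp A)
    (x : X) (hx : x ∈ opDom A) (v : X) (hv : v ≠ 0)
    (p : StrongDual ℝ X) (hp : p ∈ face A x v)
    (B : X → Set (StrongDual ℝ X)) (hB : ∀ y, B y = (fun q => q - J v - p) '' A y) :
    IsMaxMonotoneOp B ∧ opDom B = opDom A ∧ -(J v) ∈ B x ∧
      (∀ q ∈ A x, ‖J v‖ ≤ ‖q - J v - p‖) ∧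
      (∀ Bm : X → StrongDual ℝ X, IsMinNormSelection B Bm → Bm x = -(J v)) :=
  shifted_operator_minSelection_general J hJ A hA x v p hp B hB
end
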